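/- arXiv:1409.5523 — 7 statements merged into one kernel-verified Lean document; each statement's English description precedes it below -/
import Mathlib

section
/- There exists a topological embedding θ : Q → Q of the Hilbert cube into itself such that for all nonempty compact subsets A, B ⊆ Q, the subspaces A and B are homeomorphic if and only if there exists a homeomorphism h : Q → Q with h(θ(A)) = θ(B). (Consequently the homeomorphism relation on compact subsets of Q reduces to the orbit equivalence relation of the shift action of the homeomorphism group of Q on K(Q).) -/
open Set Topology TopologicalSpace

/-- The Hilbert cube `Q = ∏_{n ∈ ℕ} [0,1]`. -/
abbrev Q : Type := ℕ → unitInterval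

noncomputable section KleeTrick

instance : TietzeExtension unitInterval :=
  .of_retract ⟨Subtype.val, continuous_subtype_val⟩
    ⟨Set.projIcc 0 1 zero_le_one, continuous_projIcc⟩ <| by
      ext x; simp

/-- The compression parameter: `t = (1 + 2 v)/4 ∈ [1/4, 3/4]`. -/
def tpar (v : unitInterval) : ℝ := (1 + 2 * v.1) / 4

lemma tpar_ge (v : unitInterval) : (1/4 : ℝ) ≤ tpar v := by
  have := v.2.1; simp only [tpar]; linarith

lemma tpar_le (v : unitInterval) : tpar v ≤ 3/4 := by
  have := v.2.2; simp only [tpar]; linarith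

lemma tpar_pos (v : unitInterval) : 0 < tpar v := lt_of_lt_of_le (by norm_num) (tpar_ge v)

lemma tpar_lt_one (v : unitInterval) : tpar v < 1 := lt_of_le_of_lt (tpar_le v) (by norm_num)

lemma one_sub_tpar_pos (v : unitInterval) : 0 < 1 - tpar v := by
  have := tpar_lt_one v; linarith

lemma tpar_injective : Function.Injective tpar := by
  intro a b h
  simp only [tpar] at h
  ext; linarith

@[fun_prop] lemma continuous_tpar : Continuous tpar := by
  unfold tpar; fun_prop

/-- Parameterized PL homeomorphism of `[0,1]` sending `1/2` to `tpar v`. -/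
def psi (v : unitInterval) (s : ℝ) : ℝ :=
  if s ≤ 1/2 then 2 * tpar v * s else tpar v + (2*s - 1) * (1 - tpar v)

/-- Its inverse. -/
def psiInv (v : unitInterval) (u : ℝ) : ℝ :=
  if u ≤ tpar v then u / (2 * tpar v) else 1/2 + (u - tpar v) / (2 * (1 - tpar v))

lemma psi_mem (v : unitInterval) {s : ℝ} (h0 : 0 ≤ s) (h1 : s ≤ 1) :
    psi v s ∈ Set.Icc (0:ℝ) 1 := by
  have ht0 := tpar_pos v
  have ht1 := tpar_lt_one v
  unfold psi
  split_ifs with h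
  · constructor <;> nlinarith
  · push_neg at h
    constructor <;> nlinarith

lemma psiInv_mem (v : unitInterval) {u : ℝ} (h0 : 0 ≤ u) (h1 : u ≤ 1) :
    psiInv v u ∈ Set.Icc (0:ℝ) 1 := by
  have ht0 := tpar_pos v
  have ht1 := tpar_lt_one v
  unfold psiInv
  split_ifs with h
  · constructor
    · exact div_nonneg h0 (by linarith)
    · rw [div_le_one (by linarith)]; nlinarith
  · push_neg at h
    constructor
    · have : 0 ≤ (u - tpar v) / (2 * (1 - tpar v)) := div_nonneg (by linarith) (by linarith)
      linarith
    · have : (u - tpar v) / (2 * (1 - tpar v)) ≤ 1/2 := by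
        rw [div_le_iff₀ (by linarith)]; nlinarith
      linarith

lemma psiInv_psi (v : unitInterval) (s : ℝ) : psiInv v (psi v s) = s := by
  have ht0 := tpar_pos v
  have ht1 := tpar_lt_one v
  rcases le_or_gt s (1/2) with h | h
  · rw [psi, if_pos h, psiInv, if_pos (by nlinarith)]
    field_simp
  · rw [psi, if_neg (not_le.mpr h), psiInv, if_neg (by push_neg; nlinarith)]
    rw [eq_comm, ← sub_eq_iff_eq_add', eq_div_iff (by linarith : (2:ℝ)*(1-tpar v) ≠ 0)]
    ring

lemma psi_psiInv (v : unitInterval) (u : ℝ) : psi v (psiInv v u) = u := by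
  have ht0 := tpar_pos v
  have ht1 := tpar_lt_one v
  rcases le_or_gt u (tpar v) with h | h
  · rw [psiInv, if_pos h, psi, if_pos (by rw [div_le_iff₀ (by linarith)]; nlinarith)]
    field_simp
  · have hgt : 0 < (u - tpar v) / (2 * (1 - tpar v)) :=
      div_pos (by linarith) (by linarith)
    rw [psiInv, if_neg (not_le.mpr h), psi, if_neg (by push_neg; linarith)]
    have h1 : (u - tpar v)/(2*(1-tpar v)) * (2*(1-tpar v)) = u - tpar v :=
      div_mul_cancel₀ _ (by linarith)
    linear_combination h1

lemma psi_half (v : unitInterval) : psi v (1/2) = tpar v := by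
  unfold psi; rw [if_pos le_rfl]; ring

lemma psiInv_tpar (v : unitInterval) : psiInv v (tpar v) = 1/2 := by
  have ht0 := tpar_pos v
  unfold psiInv; rw [if_pos le_rfl]
  field_simp

lemma continuous_psi : Continuous (fun p : unitInterval × ℝ => psi p.1 p.2) := by
  unfold psi
  apply Continuous.if_le
  · fun_prop
  · fun_prop
  · exact continuous_snd
  · exact continuous_const
  · intro p hp; rw [hp]; ring

lemma continuous_psiInv : Continuous (fun p : unitInterval × ℝ => psiInv p.1 p.2) := by
  unfold psiInv
  apply Continuous.if_le
  · exact continuous_snd.div (by fun_prop) (fun p => by have := tpar_pos p.1; positivity)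
  · apply Continuous.add continuous_const
    exact (continuous_snd.sub (continuous_tpar.comp continuous_fst)).div (by fun_prop)
      (fun p => by have := one_sub_tpar_pos p.1; positivity)
  · exact continuous_snd
  · exact continuous_tpar.comp continuous_fst
  · intro p hp
    have ht0 := tpar_pos p.1
    rw [hp]
    field_simp
    ring

/-- `1/2` as an element of the unit interval. -/
def halfI : unitInterval := ⟨1/2, by constructor <;> norm_num⟩

/-- The compression map on the unit interval. -/
def cI (v : unitInterval) : unitInterval :=
  ⟨tpar v, ⟨le_of_lt (tpar_pos v), le_of_lt (tpar_lt_one v)⟩⟩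

/-- Subtype version of `psi`. -/
def PsiI (v s : unitInterval) : unitInterval := ⟨psi v s.1, psi_mem v s.2.1 s.2.2⟩

/-- Subtype version of `psiInv`. -/
def PsiInvI (v u : unitInterval) : unitInterval := ⟨psiInv v u.1, psiInv_mem v u.2.1 u.2.2⟩

lemma PsiInvI_PsiI (v s : unitInterval) : PsiInvI v (PsiI v s) = s :=
  Subtype.ext (psiInv_psi v s.1)

lemma PsiI_PsiInvI (v u : unitInterval) : PsiI v (PsiInvI v u) = u :=
  Subtype.ext (psi_psiInv v u.1)

lemma PsiI_half (v : unitInterval) : PsiI v halfI = cI v := Subtype.ext (psi_half v)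

lemma PsiInvI_cI (v : unitInterval) : PsiInvI v (cI v) = halfI := Subtype.ext (psiInv_tpar v)

lemma continuous_PsiI : Continuous (fun p : unitInterval × unitInterval => PsiI p.1 p.2) :=
  Continuous.subtype_mk
    (continuous_psi.comp (continuous_fst.prodMk (continuous_subtype_val.comp continuous_snd))) _

lemma continuous_PsiInvI : Continuous (fun p : unitInterval × unitInterval => PsiInvI p.1 p.2) :=
  Continuous.subtype_mk
    (continuous_psiInv.comp (continuous_fst.prodMk (continuous_subtype_val.comp continuous_snd))) _

/-- First Klee move: shear the second coordinate by the parameter `F` of the first. -/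
def klee1 (F : Q → Q) (hF : Continuous F) : Q × Q ≃ₜ Q × Q where
  toFun p := (p.1, fun n => PsiI (F p.1 n) (p.2 n))
  invFun p := (p.1, fun n => PsiInvI (F p.1 n) (p.2 n))
  left_inv p := by
    refine Prod.ext rfl (funext fun n => ?_)
    exact PsiInvI_PsiI _ _
  right_inv p := by
    refine Prod.ext rfl (funext fun n => ?_)
    exact PsiI_PsiInvI _ _
  continuous_toFun := by
    refine continuous_fst.prodMk (continuous_pi fun n => ?_)
    exact continuous_PsiI.comp
      (((continuous_apply n).comp (hF.comp continuous_fst)).prodMk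
        ((continuous_apply n).comp continuous_snd))
  continuous_invFun := by
    refine continuous_fst.prodMk (continuous_pi fun n => ?_)
    exact continuous_PsiInvI.comp
      (((continuous_apply n).comp (hF.comp continuous_fst)).prodMk
        ((continuous_apply n).comp continuous_snd))

/-- Second Klee move: shear the first coordinate by the parameter `G` of the second. -/
def klee2 (G : Q → Q) (hG : Continuous G) : Q × Q ≃ₜ Q × Q where
  toFun p := ((fun n => PsiInvI (G p.2 n) (p.1 n)), p.2)
  invFun p := ((fun n => PsiI (G p.2 n) (p.1 n)), p.2)
  left_inv p := by
    refine Prod.ext (funext fun n => ?_) rfl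
    exact PsiI_PsiInvI _ _
  right_inv p := by
    refine Prod.ext (funext fun n => ?_) rfl
    exact PsiInvI_PsiI _ _
  continuous_toFun := by
    refine Continuous.prodMk (continuous_pi fun n => ?_) continuous_snd
    exact continuous_PsiInvI.comp
      (((continuous_apply n).comp (hG.comp continuous_snd)).prodMk
        ((continuous_apply n).comp continuous_fst))
  continuous_invFun := by
    refine Continuous.prodMk (continuous_pi fun n => ?_) continuous_snd
    exact continuous_PsiI.comp
      (((continuous_apply n).comp (hG.comp continuous_snd)).prodMk
        ((continuous_apply n).comp continuous_fst))

/-- The compression `Q → Q`. -/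
def kap (a : Q) : Q := fun n => cI (a n)

lemma continuous_kap : Continuous kap :=
  continuous_pi fun n => Continuous.subtype_mk
    ((continuous_tpar.comp (continuous_apply n))) _

lemma kap_injective : Function.Injective kap := by
  intro a b h
  funext n
  have := congrFun h n
  simpa [kap, cI, Subtype.ext_iff] using tpar_injective (Subtype.ext_iff.mp this)

/-- The fixed half point of `Q`. -/
def halfQ : Q := fun _ => halfI

/-- Identification `Q ≃ₜ Q × Q`. -/
def eQQ : Q ≃ₜ Q × Q :=
  (Homeomorph.piCongrLeft (Y := fun _ : ℕ => unitInterval) Equiv.natSumNatEquivNat).symm.trans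
    Homeomorph.sumArrowHomeomorphProdArrow

/-- The reducing embedding. -/
def theta (a : Q) : Q := eQQ.symm (kap a, halfQ)

lemma continuous_theta : Continuous theta :=
  eQQ.symm.continuous.comp (continuous_kap.prodMk continuous_const)

lemma theta_injective : Function.Injective theta := by
  intro a b h
  have := eQQ.symm.injective h
  exact kap_injective (congrArg Prod.fst this)

/-- Homeomorphism from a compact set onto its image under a continuous injection. -/
def imgHomeo {ψ : Q → Q} (hc : Continuous ψ) (hi : Function.Injective ψ) {A : Set Q}
    (hA : IsCompact A) : A ≃ₜ (ψ '' A) :=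
  haveI : CompactSpace A := isCompact_iff_compactSpace.mp hA
  Continuous.homeoOfEquivCompactToT2 (f := Equiv.Set.image ψ A hi)
    (Continuous.subtype_mk (hc.comp continuous_subtype_val) _)

lemma imgHomeo_apply {ψ : Q → Q} (hc : Continuous ψ) (hi : Function.Injective ψ) {A : Set Q}
    (hA : IsCompact A) (x : A) :
    (imgHomeo hc hi hA x : Q) = ψ x := rfl

lemma imgHomeo_symm_apply {ψ : Q → Q} (hc : Continuous ψ) (hi : Function.Injective ψ) {A : Set Q}
    (hA : IsCompact A) (a : Q) (ha : a ∈ A) (hm : ψ a ∈ ψ '' A) :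
    (imgHomeo hc hi hA).symm ⟨ψ a, hm⟩ = ⟨a, ha⟩ := by
  exact (imgHomeo hc hi hA).toEquiv.symm_apply_eq.mpr (Subtype.ext rfl)

end KleeTrick

/-- there is a topological embedding `θ : Q → Q` such that two nonempty compact
subsets `A, B ⊆ Q` are homeomorphic iff some autohomeomorphism of `Q` carries `θ '' A`
onto `θ '' B`. -/
theorem exists_embedding_reducing_homeomorphism_to_shift_action :
    ∃ θ : Q → Q, Topology.IsEmbedding θ ∧
      ∀ A B : Set Q, IsCompact A → A.Nonempty → IsCompact B → B.Nonempty →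
        (Nonempty ((A : Type) ≃ₜ (B : Type)) ↔ ∃ h : Q ≃ₜ Q, h '' (θ '' A) = θ '' B) := by
  refine ⟨theta, (continuous_theta.isClosedEmbedding theta_injective).isEmbedding,
    fun A B hA hAne hB hBne => ?_⟩
  constructor
  · rintro ⟨f⟩
    -- Tietze extensions
    have hclA : IsClosed (kap '' A) := (hA.image continuous_kap).isClosed
    have hclB : IsClosed (kap '' B) := (hB.image continuous_kap).isClosed
    set eA := imgHomeo continuous_kap kap_injective hA with heA
    set eB := imgHomeo continuous_kap kap_injective hB with heB
    obtain ⟨F, hF⟩ := ContinuousMap.exists_restrict_eq (Y := Q) hclA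
      ⟨fun s => ((f (eA.symm s) : B) : Q),
        continuous_subtype_val.comp (f.continuous.comp eA.symm.continuous)⟩
    obtain ⟨G, hG⟩ := ContinuousMap.exists_restrict_eq (Y := Q) hclB
      ⟨fun s => ((f.symm (eB.symm s) : A) : Q),
        continuous_subtype_val.comp (f.symm.continuous.comp eB.symm.continuous)⟩
    have hFa : ∀ (a : A), F (kap a) = ((f a : B) : Q) := by
      intro a
      have h1 : F (kap a) = ((f (eA.symm ⟨kap a, mem_image_of_mem kap a.2⟩) : B) : Q) :=
        congrFun (congrArg (fun g : C(_, Q) => ⇑g) hF) ⟨kap a, mem_image_of_mem kap a.2⟩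
      rw [h1, imgHomeo_symm_apply continuous_kap kap_injective hA a a.2]
    have hGb : ∀ (b : B), G (kap b) = ((f.symm b : A) : Q) := by
      intro b
      have h1 : G (kap b) = ((f.symm (eB.symm ⟨kap b, mem_image_of_mem kap b.2⟩) : A) : Q) :=
        congrFun (congrArg (fun g : C(_, Q) => ⇑g) hG) ⟨kap b, mem_image_of_mem kap b.2⟩
      rw [h1, imgHomeo_symm_apply continuous_kap kap_injective hB b b.2]
    -- ambient homeomorphism
    set H : Q × Q ≃ₜ Q × Q :=
      (klee1 F F.continuous).trans ((klee2 G G.continuous).trans (Homeomorph.prodComm Q Q))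
    refine ⟨eQQ.trans (H.trans eQQ.symm), ?_⟩
    have key : ∀ a (ha : a ∈ A), (eQQ.trans (H.trans eQQ.symm)) (theta a)
        = theta ((f ⟨a, ha⟩ : B) : Q) := by
      intro a ha
      have e1 : eQQ (theta a) = (kap a, halfQ) := eQQ.apply_symm_apply _
      have h1 : (klee1 F F.continuous) (kap a, halfQ)
          = (kap a, kap ((f ⟨a, ha⟩ : B) : Q)) := by
        refine Prod.ext rfl (funext fun n => ?_)
        show PsiI (F (kap a) n) halfI = _
        rw [hFa ⟨a, ha⟩]
        exact PsiI_half _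
      have h2 : (klee2 G G.continuous) (kap a, kap ((f ⟨a, ha⟩ : B) : Q))
          = (halfQ, kap ((f ⟨a, ha⟩ : B) : Q)) := by
        refine Prod.ext (funext fun n => ?_) rfl
        show PsiInvI (G (kap ((f ⟨a, ha⟩ : B) : Q)) n) (kap a n) = halfI
        have : G (kap ((f ⟨a, ha⟩ : B) : Q)) = a := by
          have := hGb (f ⟨a, ha⟩)
          rw [this, Homeomorph.symm_apply_apply]
        rw [this]
        exact PsiInvI_cI _
      simp only [Homeomorph.trans_apply, e1, h1, h2, H, Homeomorph.trans_apply]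
      rfl
    rw [Set.image_image]
    apply Set.Subset.antisymm
    · rintro _ ⟨a, ha, rfl⟩
      exact ⟨((f ⟨a, ha⟩ : B) : Q), (f ⟨a, ha⟩).2, (key a ha).symm⟩
    · rintro _ ⟨b, hb, rfl⟩
      refine ⟨((f.symm ⟨b, hb⟩ : A) : Q), (f.symm ⟨b, hb⟩).2, ?_⟩
      show (eQQ.trans (H.trans eQQ.symm)) (theta ((f.symm ⟨b, hb⟩ : A) : Q)) = theta b
      rw [key _ (f.symm ⟨b, hb⟩).2]
      rw [Subtype.coe_eta, Homeomorph.apply_symm_apply]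
  · rintro ⟨h, hh⟩
    have e1 : A ≃ₜ (theta '' A) := imgHomeo continuous_theta theta_injective hA
    have e2 : (theta '' A) ≃ₜ (h '' (theta '' A)) := h.image _
    have e3 : (h '' (theta '' A)) ≃ₜ (theta '' B) := Homeomorph.setCongr hh
    have e4 : B ≃ₜ (theta '' B) := imgHomeo continuous_theta theta_injective hB
    exact ⟨(e1.trans (e2.trans e3)).trans e4.symm⟩
end

section
/- Let X and Y be compact metric spaces, A ⊆ X and B ⊆ Y closed subsets such that A contains all isolated points of X and B contains all isolated points of Y, and let I_d(X,A) ⊆ X × [0,1] and I_e(Y,B) ⊆ Y × [0,1] be built from admissible sequences d and e respectively. Then every homeomorphism g : X → Y with g(A) = B extends to a homeomorphism f : I_d(X,A) → I_e(Y,B), i.e., there is a homeomorphism f with f(x, 0) = (g(x), 0) for all x ∈ X. -/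
/-!
Both `g ∘ d` and `e` are dense in `B` and repeat every value infinitely often, so some bijection
`σ` of `ℕ` pairs them with `dist (g (d n)) (e (σ n)) → 0`: Schröder–Bernstein, applied to two
strictly increasing selections respecting the relation "closer than `1/(n+1)` or `1/(m+1)`",
yields one. Extending `g` by `ã_n ↦ ã_{σ n}` gives a bijection `I_d(X,A) → I_e(Y,B)`. It is
continuous at the isolated points `ã_n` trivially, and at `(x, 0)` because nearby `ã_n` have `n`
large and `d n` close to `x`. As `I_d(X,A)` is compact, the bijection is a homeomorphism.
-/

open Set Topology

/-- The space `I_d(X,A) ⊆ X × [0,1]`: the copy `X × {0}` of `X` together with the isolated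
points `ã_n = (d_n, 1/n)` (here indexed by `n : ℕ`, with `ã_n = (d n, 1/(n+1))`). -/
def Itilde {X : Type*} [TopologicalSpace X] (d : ℕ → X) : Set (X × ℝ) :=
  (Set.univ ×ˢ {(0 : ℝ)}) ∪ Set.range (fun n : ℕ => (d n, 1 / (n + 1 : ℝ)))

/-- A sequence `d` is admissible for `A` if it takes values in `A`, has dense range in `A`,
and attains each of its values at infinitely many indices. -/
def Admissible {X : Type*} [TopologicalSpace X] (A : Set X) (d : ℕ → X) : Prop :=
  (∀ n, d n ∈ A) ∧ A ⊆ closure (Set.range d) ∧ ∀ n, {m : ℕ | d m = d n}.Infinite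

open Filter

theorem exists_equiv_forall_rel_of_frequently {r : ℕ → ℕ → Prop}
    (hrow : ∀ n, ∃ᶠ m in atTop, r n m) (hcol : ∀ m, ∃ᶠ n in atTop, r n m) :
    ∃ σ : ℕ ≃ ℕ, ∀ n, r n (σ n) := by
  obtain ⟨φ, hφ, hrφ⟩ := Filter.extraction_forall_of_frequently hrow
  obtain ⟨ψ, hψ, hrψ⟩ := Filter.extraction_forall_of_frequently hcol
  obtain ⟨σ, hσ, hrσ⟩ :=
    Function.Embedding.schroeder_bernstein_of_rel hφ.injective hψ.injective r hrφ hrψ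
  exact ⟨Equiv.ofBijective σ hσ, hrσ⟩

section Metric

variable {Z : Type*} [PseudoMetricSpace Z]

theorem frequently_dist_lt_of_mem_closure_range {v : ℕ → Z} {z : Z}
    (hz : z ∈ closure (range v)) (hv : ∀ m, {k | v k = v m}.Infinite) {ε : ℝ} (hε : 0 < ε) :
    ∃ᶠ m in atTop, dist z (v m) < ε := by
  obtain ⟨m₀, hm₀⟩ := Metric.mem_closure_range_iff.1 hz ε hε
  refine Nat.frequently_atTop_iff_infinite.2 ((hv m₀).mono fun m (hm : v m = v m₀) => ?_)
  show dist z (v m) < ε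
  rwa [hm]

theorem exists_equiv_tendsto_dist_zero {u v : ℕ → Z}
    (hu : ∀ n, u n ∈ closure (range v)) (hv : ∀ m, v m ∈ closure (range u))
    (hu_inf : ∀ n, {k | u k = u n}.Infinite) (hv_inf : ∀ m, {k | v k = v m}.Infinite) :
    ∃ σ : ℕ ≃ ℕ, Tendsto (fun n => dist (u n) (v (σ n))) atTop (𝓝 0) := by
  obtain ⟨σ, hσ⟩ := exists_equiv_forall_rel_of_frequently
    (r := fun n m => dist (u n) (v m) < 1 / (n + 1) ∨ dist (u n) (v m) < 1 / (m + 1))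
    (fun n => (frequently_dist_lt_of_mem_closure_range (hu n) hv_inf Nat.one_div_pos_of_nat).mono
      fun _ => Or.inl)
    (fun m => (frequently_dist_lt_of_mem_closure_range (hv m) hu_inf Nat.one_div_pos_of_nat).mono
      fun _ h => Or.inr (by rwa [dist_comm]))
  refine ⟨σ, squeeze_zero (g := fun n => 1 / (n + 1) + 1 / (σ n + 1)) (fun _ => dist_nonneg)
    (fun n => ?_) ?_⟩
  · exact (hσ n).elim (fun h => h.le.trans (le_add_of_nonneg_right Nat.one_div_pos_of_nat.le))
      (fun h => h.le.trans (le_add_of_nonneg_left Nat.one_div_pos_of_nat.le))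
  · simpa using (tendsto_one_div_add_atTop_nhds_zero_nat (𝕜 := ℝ)).add
      (tendsto_one_div_add_atTop_nhds_zero_nat.comp σ.injective.nat_tendsto_atTop)

end Metric

theorem IsCompact.union_range_of_tendsto_nhdsSet {X ι : Type*} [TopologicalSpace X] {K : Set X}
    (hK : IsCompact K) {f : ι → X} (hf : Tendsto f cofinite (𝓝ˢ K)) :
    IsCompact (K ∪ range f) := by
  intro l hl hle
  by_cases hK' : ∃ x ∈ K, ClusterPt x l
  · obtain ⟨x, hx, hxl⟩ := hK'
    exact ⟨x, Or.inl hx, hxl⟩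
  have hdisj : Disjoint (𝓝ˢ K) l :=
    hK.disjoint_nhdsSet_left.2 fun x hx => disjoint_iff.2 <| not_neBot.1 fun h => hK' ⟨x, hx, h⟩
  obtain ⟨U, hU, V, hV, hUV⟩ := Filter.disjoint_iff.1 hdisj
  have hfin : (f '' (f ⁻¹' U)ᶜ).Finite := (mem_cofinite.1 (hf hU)).image f
  have hl : f '' (f ⁻¹' U)ᶜ ∈ l := by
    refine mem_of_superset (inter_mem hV (le_principal_iff.1 hle)) ?_
    rintro y ⟨hyV, hyK | ⟨i, rfl⟩⟩
    · exact (hUV.ne_of_mem (subset_of_mem_nhdsSet hU hyK) hyV rfl).elim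
    · exact ⟨i, fun hi => hUV.ne_of_mem hi hyV rfl, rfl⟩
  obtain ⟨x, ⟨i, -, rfl⟩, hx⟩ := hfin.isCompact (le_principal_iff.2 hl)
  exact ⟨f i, Or.inr ⟨i, rfl⟩, hx⟩

theorem le_atTop_of_tendsto_one_div_add_one {l : Filter ℕ}
    (h : Tendsto (fun n : ℕ => 1 / (n + 1 : ℝ)) l (𝓝 0)) : l ≤ atTop := by
  rw [← tendsto_id', tendsto_atTop]
  intro N
  filter_upwards [h.eventually (gt_mem_nhds (Nat.one_div_pos_of_nat (n := N)))] with n hn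
  rw [one_div_lt_one_div (by positivity) (by positivity)] at hn
  exact_mod_cast (by linarith : (N : ℝ) ≤ n)

/-- The upper end is `1 / (n + 1/2)` rather than `1 / n`, which would be `0` for `n = 0`. -/
theorem one_div_add_one_mem_Ioo_iff {m n : ℕ} :
    1 / (m + 1 : ℝ) ∈ Ioo (1 / (n + 2 : ℝ)) (1 / (n + 1 / 2 : ℝ)) ↔ m = n := by
  rw [mem_Ioo, one_div_lt_one_div (by positivity) (by positivity),
    one_div_lt_one_div (by positivity) (by positivity)]
  constructor
  · rintro ⟨h₁, h₂⟩
    have : n < m + 1 := by exact_mod_cast (by linarith : (n : ℝ) < m + 1)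
    have : m < n + 1 := by exact_mod_cast (by linarith : (m : ℝ) < n + 1)
    omega
  · rintro rfl
    constructor <;> linarith

namespace Itilde

noncomputable section

variable {X : Type*} [TopologicalSpace X] (d : ℕ → X)

def base (x : X) : Itilde d := ⟨(x, 0), Or.inl ⟨mem_univ x, rfl⟩⟩

def point (n : ℕ) : Itilde d := ⟨(d n, 1 / (n + 1 : ℝ)), Or.inr ⟨n, rfl⟩⟩

theorem range_base_union_range_point : range (base d) ∪ range (point d) = univ := by
  refine eq_univ_of_forall fun ⟨p, hp⟩ => ?_
  rcases hp with ⟨-, hp0 : p.2 = 0⟩ | ⟨n, rfl⟩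
  · exact Or.inl ⟨p.1, Subtype.ext (Prod.ext rfl hp0.symm)⟩
  · exact Or.inr ⟨n, rfl⟩

def sumEquiv : X ⊕ ℕ ≃ Itilde d :=
  Equiv.ofBijective (Sum.elim (base d) (point d))
    ⟨Function.Injective.sumElim (fun x y h => congrArg (fun p : Itilde d => p.1.1) h)
      (fun m n h => by simpa [point] using congrArg (fun p : Itilde d => p.1.2) h)
      (fun x n h => Nat.one_div_pos_of_nat.ne (congrArg (fun p : Itilde d => p.1.2) h)),
     by rw [← range_eq_univ, Sum.elim_range, range_base_union_range_point]⟩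

theorem continuous_base : Continuous (base d) :=
  (continuous_id.prodMk continuous_const).subtype_mk _

theorem isInducing_base : IsInducing (base d) :=
  IsInducing.subtypeVal.of_comp_iff.1 (isEmbedding_prodMkLeft (0 : ℝ)).isInducing

theorem isOpen_singleton_point (n : ℕ) : IsOpen {point d n} := by
  have : {point d n} =
      (fun p : Itilde d => p.1.2) ⁻¹' Ioo (1 / (n + 2 : ℝ)) (1 / (n + 1 / 2 : ℝ)) := by
    refine Subset.antisymm (singleton_subset_iff.2 (one_div_add_one_mem_Ioo_iff.2 rfl)) ?_
    rintro ⟨p, hp⟩ hpI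
    replace hpI : p.2 ∈ Ioo (1 / (n + 2 : ℝ)) (1 / (n + 1 / 2 : ℝ)) := hpI
    obtain ⟨-, hp0⟩ | ⟨m, rfl⟩ := hp
    · exact absurd (mem_singleton_iff.1 hp0 ▸ hpI.1) (not_lt.2 (by positivity))
    · exact congrArg (point d) (one_div_add_one_mem_Ioo_iff.1 hpI)
  rw [this]
  exact isOpen_Ioo.preimage (continuous_snd.comp continuous_subtype_val)

theorem comap_point_nhds_base_le (x : X) :
    comap (point d) (𝓝 (base d x)) ≤ atTop ⊓ comap d (𝓝 x) := by
  rw [nhds_subtype, comap_comap]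
  exact le_inf
    (le_atTop_of_tendsto_one_div_add_one ((continuous_snd.tendsto _).comp tendsto_comap))
    (tendsto_iff_comap.1 ((continuous_fst.tendsto _).comp tendsto_comap))

theorem continuous_of_tendsto {W : Type*} [TopologicalSpace W] {φ : Itilde d → W}
    (hbase : Continuous (φ ∘ base d))
    (hpoint : ∀ x, Tendsto (φ ∘ point d) (atTop ⊓ comap d (𝓝 x)) (𝓝 (φ (base d x)))) :
    Continuous φ := by
  refine continuous_iff_continuousAt.2 fun p => ?_
  obtain ⟨x, rfl⟩ | ⟨n, rfl⟩ : p ∈ range (base d) ∪ range (point d) :=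
    range_base_union_range_point d ▸ mem_univ p
  · rw [ContinuousAt, ← nhdsWithin_univ, ← range_base_union_range_point, nhdsWithin_union,
      tendsto_sup, nhdsWithin, nhdsWithin, ← map_comap, ← map_comap, tendsto_map'_iff,
      tendsto_map'_iff, ← (isInducing_base d).nhds_eq_comap]
    exact ⟨hbase.tendsto x, (hpoint x).mono_left (comap_point_nhds_base_le d x)⟩
  · rw [ContinuousAt, (isOpen_singleton_iff_nhds_eq_pure _).1 (isOpen_singleton_point d n)]
    exact tendsto_pure_nhds φ _

theorem isCompact [CompactSpace X] : IsCompact (Itilde d) := by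
  refine (isCompact_univ.prod isCompact_singleton).union_range_of_tendsto_nhdsSet ?_
  rw [isCompact_univ.nhdsSet_prod_eq isCompact_singleton, nhdsSet_univ, nhdsSet_singleton,
    Nat.cofinite_eq_atTop]
  exact tendsto_top.prodMk tendsto_one_div_add_atTop_nhds_zero_nat

instance [CompactSpace X] : CompactSpace (Itilde d) :=
  isCompact_iff_compactSpace.1 (isCompact d)

section Congr

variable {Y : Type*} [TopologicalSpace Y] {e : ℕ → Y}

def congr (g : X ≃ Y) (σ : ℕ ≃ ℕ) : Itilde d ≃ Itilde e :=
  (sumEquiv d).symm.trans ((g.sumCongr σ).trans (sumEquiv e))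

@[simp]
theorem congr_base (g : X ≃ Y) (σ : ℕ ≃ ℕ) (x : X) : congr d g σ (base d x) = base e (g x) :=
  congrArg (sumEquiv e ∘ Sum.map g σ) ((sumEquiv d).symm_apply_apply (.inl x))

@[simp]
theorem congr_point (g : X ≃ Y) (σ : ℕ ≃ ℕ) (n : ℕ) :
    congr d g σ (point d n) = point e (σ n) :=
  congrArg (sumEquiv e ∘ Sum.map g σ) ((sumEquiv d).symm_apply_apply (.inr n))

end Congr

theorem continuous_congr {Y : Type*} [PseudoMetricSpace Y] {e : ℕ → Y} (g : X ≃ₜ Y) (σ : ℕ ≃ ℕ)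
    (h : Tendsto (fun n => dist (g (d n)) (e (σ n))) atTop (𝓝 0)) :
    Continuous (congr d (e := e) g.toEquiv σ) := by
  refine continuous_of_tendsto d ?_ fun x => ?_
  · have : congr d g.toEquiv σ ∘ base d = base e ∘ g := funext (congr_base d g.toEquiv σ)
    exact this ▸ (continuous_base e).comp g.continuous
  · have : congr d g.toEquiv σ ∘ point d = point e ∘ σ := funext (congr_point d g.toEquiv σ)
    rw [this, congr_base, tendsto_subtype_rng]
    refine Tendsto.prodMk_nhds ?_ ?_
    · exact ((g.continuous.tendsto x).comp (tendsto_comap.mono_left inf_le_right)).congr_dist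
        (h.mono_left inf_le_left)
    · exact (tendsto_one_div_add_atTop_nhds_zero_nat.comp σ.injective.nat_tendsto_atTop).mono_left
        inf_le_left

end

end Itilde

theorem homeomorph_extends_to_Itilde_general
    {X Y : Type*} [MetricSpace X] [CompactSpace X] [MetricSpace Y]
    {A : Set X} {B : Set Y}
    {d : ℕ → X} {e : ℕ → Y} (hd : Admissible A d) (he : Admissible B e)
    (g : X ≃ₜ Y) (hg : g '' A = B) :
    ∃ f : (Itilde d : Type _) ≃ₜ (Itilde e : Type _),
      ∀ x : X, (f ⟨(x, 0), Or.inl (Set.mk_mem_prod (Set.mem_univ x) rfl)⟩ : Y × ℝ)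
        = (g x, 0) := by
  obtain ⟨hdA, hAd, hd_inf⟩ := hd
  obtain ⟨heB, hBe, he_inf⟩ := he
  have hgd_mem : ∀ n, g (d n) ∈ closure (range e) :=
    fun n => hBe (hg ▸ mem_image_of_mem g (hdA n))
  have he_mem : ∀ m, e m ∈ closure (range (g ∘ d)) := fun m => by
    obtain ⟨a, ha, hae⟩ := hg.symm ▸ heB m
    rw [← hae, range_comp]
    exact mem_closure_image g.continuous.continuousAt (hAd ha)
  have hgd_inf : ∀ n, {k | g (d k) = g (d n)}.Infinite := by
    simpa only [g.injective.eq_iff] using hd_inf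
  obtain ⟨σ, hσ⟩ := exists_equiv_tendsto_dist_zero (u := g ∘ d) hgd_mem he_mem hgd_inf he_inf
  exact ⟨(Itilde.continuous_congr d g σ hσ).homeoOfEquivCompactToT2,
    fun x => congrArg Subtype.val (Itilde.congr_base d g.toEquiv σ x)⟩

/-- any homeomorphism `g : X → Y` with `g '' A = B` extends to a homeomorphism
`I_d(X,A) → I_e(Y,B)`. -/
theorem homeomorph_extends_to_Itilde
    {X Y : Type*} [MetricSpace X] [CompactSpace X] [MetricSpace Y] [CompactSpace Y]
    {A : Set X} {B : Set Y} (hA : IsClosed A) (hB : IsClosed B)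
    (hAiso : ∀ x : X, IsOpen ({x} : Set X) → x ∈ A)
    (hBiso : ∀ y : Y, IsOpen ({y} : Set Y) → y ∈ B)
    {d : ℕ → X} {e : ℕ → Y} (hd : Admissible A d) (he : Admissible B e)
    (g : X ≃ₜ Y) (hg : g '' A = B) :
    ∃ f : (Itilde d : Type _) ≃ₜ (Itilde e : Type _),
      ∀ x : X, (f ⟨(x, 0), Or.inl (Set.mk_mem_prod (Set.mem_univ x) rfl)⟩ : Y × ℝ)
        = (g x, 0) :=
  homeomorph_extends_to_Itilde_general hd he g hg
end

section
/- Let X and Y be compact metric spaces, A ⊆ X and B ⊆ Y closed subsets such that A contains all isolated points of X and B contains all isolated points of Y, and let I_d(X,A) ⊆ X × [0,1] and I_e(Y,B) ⊆ Y × [0,1] be built from admissible sequences d and e respectively. Then every homeomorphism f : I_d(X,A) → I_e(Y,B) satisfies f(X × {0}) = Y × {0} and f(A × {0}) = B × {0}; in particular f restricts to a homeomorphism from X to Y carrying A onto B. -/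
open Set Topology

lemma itilde_mem {X : Type*} [TopologicalSpace X] {d : ℕ → X} {p : X × ℝ} :
    p ∈ Itilde d ↔ p.2 = 0 ∨ ∃ n : ℕ, p = (d n, 1 / (n + 1 : ℝ)) := by
  simp only [Itilde, Set.mem_union, Set.mem_prod, Set.mem_univ, true_and,
    Set.mem_singleton_iff, Set.mem_range]
  constructor
  · rintro (h | ⟨n, hn⟩)
    · exact Or.inl h
    · exact Or.inr ⟨n, hn.symm⟩
  · rintro (h | ⟨n, hn⟩)
    · exact Or.inl h
    · exact Or.inr ⟨n, hn.symm⟩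

lemma window_spec {n m : ℕ} (h1 : (1:ℝ)/(n+2) < 1/(m+1)) (h2 : (1/(m+1) : ℝ) * n < 1) :
    m = n := by
  rw [div_lt_div_iff₀ (by positivity) (by positivity), one_mul, one_mul] at h1
  rw [div_mul_eq_mul_div, one_mul, div_lt_one (by positivity)] at h2
  have h1' : m + 1 < n + 2 := by exact_mod_cast h1
  have h2' : n < m + 1 := by exact_mod_cast h2
  omega

lemma isolated_iff {X : Type*} [MetricSpace X] {A : Set X}
    (hAiso : ∀ x : X, IsOpen ({x} : Set X) → x ∈ A)
    {d : ℕ → X} (hd : Admissible A d) (p : (Itilde d : Set (X × ℝ))) :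
    IsOpen ({p} : Set (Itilde d : Set (X × ℝ))) ↔ (p : X × ℝ).2 ≠ 0 := by
  constructor
  · -- if {p} is open then p is one of the ã_n, so its height is nonzero
    intro hop
    by_contra h0
    obtain ⟨U, hU, hUp⟩ := isOpen_induced_iff.mp hop
    have hpU : (p : X × ℝ) ∈ U := by
      have : p ∈ (Subtype.val ⁻¹' U : Set (Itilde d : Set (X × ℝ))) := by
        rw [hUp]; exact rfl
      exact this
    set x : X := (p : X × ℝ).1 with hx
    have hpval : (p : X × ℝ) = (x, 0) := by
      ext
      · rfl
      · exact h0
    by_cases hxo : IsOpen ({x} : Set X)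
    · -- x is isolated, hence x ∈ A, hence x = d n and (x, 1/(m+1)) ∈ Itilde for many m
      have hxA : x ∈ A := hAiso x hxo
      have hxc : x ∈ closure (Set.range d) := hd.2.1 hxA
      obtain ⟨y, hy1, hy2⟩ := mem_closure_iff.mp hxc {x} hxo rfl
      obtain ⟨n, hn⟩ := hy2
      -- the vertical slice of U at x is an open nbhd of 0
      have hcont : Continuous (fun t : ℝ => ((x, t) : X × ℝ)) :=
        (continuous_const.prodMk continuous_id)
      have hVopen : IsOpen ((fun t : ℝ => ((x, t) : X × ℝ)) ⁻¹' U) := hU.preimage hcont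
      have hV0 : (0 : ℝ) ∈ (fun t : ℝ => ((x, t) : X × ℝ)) ⁻¹' U := by
        simp only [Set.mem_preimage]
        rw [← hpval]; exact hpU
      obtain ⟨ε, hε, hball⟩ := Metric.isOpen_iff.mp hVopen 0 hV0
      obtain ⟨m, hm1, hm2⟩ := (hd.2.2 n).exists_gt ⌈1/ε⌉₊
      have hdm : d m = x := by rw [Set.mem_setOf_eq] at hm1; rw [hm1, hn, hy1]
      have hmε : (1 : ℝ)/(m+1) < ε := by
        have h1 : (1:ℝ)/ε ≤ ⌈1/ε⌉₊ := Nat.le_ceil _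
        have h2 : ((⌈1/ε⌉₊ : ℝ)) < m + 1 := by exact_mod_cast Nat.lt_succ_of_lt hm2
        rw [div_lt_iff₀ (by positivity), ← div_lt_iff₀' hε]
        linarith
      have hqU : ((x, 1/(m+1)) : X × ℝ) ∈ U := by
        apply hball
        simp only [Metric.mem_ball, Real.dist_eq, sub_zero]
        rw [abs_of_pos (by positivity)]
        exact hmε
      have hqI : ((x, 1/(m+1)) : X × ℝ) ∈ Itilde d := by
        rw [itilde_mem]
        exact Or.inr ⟨m, by rw [hdm]⟩
      have : (⟨(x, 1/(m+1)), hqI⟩ : (Itilde d : Set (X × ℝ))) ∈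
          (Subtype.val ⁻¹' U : Set (Itilde d : Set (X × ℝ))) := hqU
      rw [hUp, Set.mem_singleton_iff] at this
      have : ((x, 1/(m+1)) : X × ℝ) = (p : X × ℝ) := congrArg Subtype.val this
      rw [hpval] at this
      have : (1 : ℝ)/(m+1) = 0 := congrArg Prod.snd this
      have : (0:ℝ) < 1/(m+1) := by positivity
      linarith
    · -- x not isolated: the horizontal slice of U at 0 contains another point of X
      have hWopen : IsOpen ((fun y : X => ((y, 0) : X × ℝ)) ⁻¹' U) :=
        hU.preimage (continuous_id.prodMk continuous_const)
      have hWx : x ∈ (fun y : X => ((y, 0) : X × ℝ)) ⁻¹' U := by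
        simp only [Set.mem_preimage]; rw [← hpval]; exact hpU
      have hne : ∃ y ∈ (fun y : X => ((y, 0) : X × ℝ)) ⁻¹' U, y ≠ x := by
        by_contra hc
        push_neg at hc
        apply hxo
        have : (fun y : X => ((y, 0) : X × ℝ)) ⁻¹' U = {x} := by
          apply Set.Subset.antisymm
          · intro y hy; exact hc y hy
          · intro y hy; rw [Set.mem_singleton_iff] at hy; rwa [hy]
        rw [← this]; exact hWopen
      obtain ⟨y, hyU, hyx⟩ := hne
      have hyI : ((y, 0) : X × ℝ) ∈ Itilde d := by rw [itilde_mem]; exact Or.inl rfl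
      have : (⟨(y, 0), hyI⟩ : (Itilde d : Set (X × ℝ))) ∈
          (Subtype.val ⁻¹' U : Set (Itilde d : Set (X × ℝ))) := hyU
      rw [hUp, Set.mem_singleton_iff] at this
      have : ((y, 0) : X × ℝ) = (p : X × ℝ) := congrArg Subtype.val this
      rw [hpval] at this
      exact hyx (congrArg Prod.fst this)
  · -- if p = ã_n then the window singles it out
    intro h0
    obtain ⟨n, hn⟩ : ∃ n : ℕ, (p : X × ℝ) = (d n, 1/(n+1 : ℝ)) := by
      rcases itilde_mem.mp p.2 with h | h
      · exact absurd h h0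
      · exact h
    have hUo : IsOpen {q : X × ℝ | (1:ℝ)/(n+2) < q.2 ∧ q.2 * n < 1} := by
      apply IsOpen.inter
      · exact isOpen_lt continuous_const continuous_snd
      · exact isOpen_lt (continuous_snd.mul continuous_const) continuous_const
    rw [isOpen_induced_iff]
    refine ⟨{q : X × ℝ | (1:ℝ)/(n+2) < q.2 ∧ q.2 * n < 1}, hUo, ?_⟩
    ext q
    simp only [Set.mem_preimage, Set.mem_setOf_eq, Set.mem_singleton_iff]
    constructor
    · rintro ⟨hq1, hq2⟩
      rcases itilde_mem.mp q.2 with h | ⟨m, hm⟩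
      · rw [h] at hq1
        have : (0:ℝ) < 1/(n+2) := by positivity
        linarith
      · have hq2' : (q : X × ℝ).2 = 1/(m+1 : ℝ) := by rw [hm]
        rw [hq2'] at hq1 hq2
        have := window_spec hq1 hq2
        apply Subtype.ext
        rw [hm, hn, this]
    · rintro rfl
      rw [hn]
      constructor
      · apply div_lt_div_of_pos_left one_pos (by positivity)
        linarith
      · rw [div_mul_eq_mul_div, one_mul, div_lt_one (by positivity)]
        linarith

lemma closure_iff {X : Type*} [MetricSpace X] {A : Set X} (hA : IsClosed A)
    {d : ℕ → X} (hd : Admissible A d) (p : (Itilde d : Set (X × ℝ))) :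
    p ∈ closure {q : (Itilde d : Set (X × ℝ)) | (q : X × ℝ).2 ≠ 0} ↔
      ((p : X × ℝ).2 ≠ 0 ∨ (p : X × ℝ).1 ∈ A) := by
  have himg : (Subtype.val '' {q : (Itilde d : Set (X × ℝ)) | (q : X × ℝ).2 ≠ 0})
      = Set.range (fun n : ℕ => ((d n, 1 / (n + 1 : ℝ)) : X × ℝ)) := by
    apply Set.Subset.antisymm
    · rintro q ⟨⟨q', hq'⟩, hq2, rfl⟩
      rcases itilde_mem.mp hq' with h | h
      · exact absurd h hq2
      · obtain ⟨m, hm⟩ := h; exact ⟨m, hm.symm⟩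
    · rintro q ⟨m, rfl⟩
      refine ⟨⟨(d m, 1/(m+1:ℝ)), ?_⟩, ?_, rfl⟩
      · rw [itilde_mem]; exact Or.inr ⟨m, rfl⟩
      · simp only [Set.mem_setOf_eq]
        positivity
  rw [closure_subtype, himg]
  constructor
  · intro hcl
    by_cases h0 : (p : X × ℝ).2 = 0
    · right
      have h1 : (p : X × ℝ).1 ∈ Prod.fst '' closure
          (Set.range (fun n : ℕ => ((d n, 1 / (n + 1 : ℝ)) : X × ℝ))) :=
        ⟨(p : X × ℝ), hcl, rfl⟩
      have h2 : (p : X × ℝ).1 ∈ closure (Prod.fst ''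
          Set.range (fun n : ℕ => ((d n, 1 / (n + 1 : ℝ)) : X × ℝ))) :=
        image_closure_subset_closure_image continuous_fst h1
      have h3 : (Prod.fst '' Set.range (fun n : ℕ => ((d n, 1 / (n + 1 : ℝ)) : X × ℝ))) ⊆ A := by
        rintro y ⟨q, ⟨m, rfl⟩, rfl⟩
        exact hd.1 m
      have h4 : (p : X × ℝ).1 ∈ closure A := closure_mono h3 h2
      rwa [hA.closure_eq] at h4
    · exact Or.inl h0
  · intro h
    by_cases h0 : (p : X × ℝ).2 = 0
    · -- p = (a, 0) with a ∈ A : approximate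
      have hxA : (p : X × ℝ).1 ∈ A := by
        rcases h with h | h
        · exact absurd h0 h
        · exact h
      rw [Metric.mem_closure_iff]
      intro ε hε
      obtain ⟨y, hy1, hy2⟩ := Metric.mem_closure_iff.mp (hd.2.1 hxA) ε hε
      obtain ⟨n, rfl⟩ := hy1
      obtain ⟨m, hm1, hm2⟩ := (hd.2.2 n).exists_gt ⌈1/ε⌉₊
      rw [Set.mem_setOf_eq] at hm1
      refine ⟨(d m, 1/(m+1:ℝ)), ⟨m, rfl⟩, ?_⟩
      rw [Prod.dist_eq]
      have hd1 : dist (p : X × ℝ).1 (d m) < ε := by rw [hm1]; exact hy2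
      have hd2 : dist (p : X × ℝ).2 (1/(m+1:ℝ)) < ε := by
        rw [h0, Real.dist_eq, zero_sub, abs_neg, abs_of_pos (by positivity)]
        have h1 : (1:ℝ)/ε ≤ ⌈1/ε⌉₊ := Nat.le_ceil _
        have h2 : ((⌈1/ε⌉₊ : ℝ)) < m + 1 := by exact_mod_cast Nat.lt_succ_of_lt hm2
        rw [div_lt_iff₀ (by positivity), ← div_lt_iff₀' hε]
        linarith
      exact max_lt hd1 hd2
    · -- p itself is one of the ã_n, hence in the set
      apply subset_closure
      rcases itilde_mem.mp p.2 with h' | ⟨m, hm⟩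
      · exact absurd h' h0
      · exact ⟨m, hm.symm⟩

lemma homeo_singleton_open {α β : Type*} [TopologicalSpace α] [TopologicalSpace β]
    (f : α ≃ₜ β) (p : α) : IsOpen ({f p} : Set β) ↔ IsOpen ({p} : Set α) := by
  constructor
  · intro h
    have := f.symm.isOpenMap _ h
    simpa using this
  · intro h
    have := f.isOpenMap _ h
    simpa using this

/-- any homeomorphism `f : I_d(X,A) → I_e(Y,B)` maps `X × {0}` onto `Y × {0}`
and `A × {0}` onto `B × {0}`. -/
theorem Itilde_homeomorph_restricts
    {X Y : Type*} [MetricSpace X] [CompactSpace X] [MetricSpace Y] [CompactSpace Y]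
    {A : Set X} {B : Set Y} (hA : IsClosed A) (hB : IsClosed B)
    (hAiso : ∀ x : X, IsOpen ({x} : Set X) → x ∈ A)
    (hBiso : ∀ y : Y, IsOpen ({y} : Set Y) → y ∈ B)
    {d : ℕ → X} {e : ℕ → Y} (hd : Admissible A d) (he : Admissible B e)
    (f : (Itilde d : Type _) ≃ₜ (Itilde e : Type _)) :
    f '' {p : Itilde d | (p : X × ℝ).2 = 0} = {q : Itilde e | (q : Y × ℝ).2 = 0} ∧
    f '' {p : Itilde d | (p : X × ℝ).2 = 0 ∧ (p : X × ℝ).1 ∈ A}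
      = {q : Itilde e | (q : Y × ℝ).2 = 0 ∧ (q : Y × ℝ).1 ∈ B} := by
  have hT : f '' {p : Itilde d | (p : X × ℝ).2 ≠ 0} = {q : Itilde e | (q : Y × ℝ).2 ≠ 0} := by
    ext q
    constructor
    · rintro ⟨p, hp, rfl⟩
      rw [Set.mem_setOf_eq, ← isolated_iff hBiso he (f p), homeo_singleton_open]
      exact (isolated_iff hAiso hd p).mpr hp
    · intro hq
      refine ⟨f.symm q, ?_, f.apply_symm_apply q⟩
      rw [Set.mem_setOf_eq, ← isolated_iff hAiso hd (f.symm q),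
        ← homeo_singleton_open f, f.apply_symm_apply]
      exact (isolated_iff hBiso he q).mpr hq
  have hcomplX : ({p : Itilde d | (p : X × ℝ).2 ≠ 0})ᶜ = {p : Itilde d | (p : X × ℝ).2 = 0} := by
    ext p; simp
  have hcomplY : ({q : Itilde e | (q : Y × ℝ).2 ≠ 0})ᶜ = {q : Itilde e | (q : Y × ℝ).2 = 0} := by
    ext q; simp
  have hS : f '' {p : Itilde d | (p : X × ℝ).2 = 0} = {q : Itilde e | (q : Y × ℝ).2 = 0} := by
    rw [← hcomplX, Set.image_compl_eq f.bijective, hT, hcomplY]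
  refine ⟨hS, ?_⟩
  have hXchar : {p : Itilde d | (p : X × ℝ).2 = 0 ∧ (p : X × ℝ).1 ∈ A}
      = closure {p : Itilde d | (p : X × ℝ).2 ≠ 0} ∩ {p : Itilde d | (p : X × ℝ).2 = 0} := by
    ext p
    simp only [Set.mem_setOf_eq, Set.mem_inter_iff, closure_iff hA hd p]
    tauto
  have hYchar : {q : Itilde e | (q : Y × ℝ).2 = 0 ∧ (q : Y × ℝ).1 ∈ B}
      = closure {q : Itilde e | (q : Y × ℝ).2 ≠ 0} ∩ {q : Itilde e | (q : Y × ℝ).2 = 0} := by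
    ext q
    simp only [Set.mem_setOf_eq, Set.mem_inter_iff, closure_iff hB he q]
    tauto
  rw [hXchar, hYchar, Set.image_inter f.injective, f.image_closure, hT, hS]
end

section
/- Let X be a compact metric space and A ⊆ X a closed subset containing all isolated points of X. If d and d' are two admissible sequences in A, then there is a homeomorphism from I_d(X,A) to I_{d'}(X,A) which is the identity on X × {0}. In particular, up to homeomorphism, the space I(X,A) does not depend on the choice of admissible sequence. -/
open Set Topology

/-!
Both spaces are copies of `X ⊕ ℕ`: `X` sits at height `0` and the points `ã_n` are isolated.
A bijection `e` of `ℕ` with `dist (ã_n, ã'_{e n}) → 0` therefore gives a homeomorphism fixing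
`X × {0}`, since near `X × {0}` it moves points by arbitrarily little. Such an `e` comes from the
Schröder–Bernstein construction applied to injective matchings `d → d'` and `d' → d` with
`dist (d_n, d'_{φ n}) < 1/(n+1)`; these exist because each range is dense in `A` and every value
is repeated infinitely often.
-/

open Function Filter

lemma strictAnti_one_div_add_one : StrictAnti fun n : ℕ => 1 / (n + 1 : ℝ) :=
  fun _ _ h => Nat.one_div_lt_one_div h

namespace Itilde

section Parametrization

variable {X : Type*} (d d' : ℕ → X)

noncomputable def pt (n : ℕ) : X × ℝ := (d n, 1 / (n + 1 : ℝ))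

noncomputable def param : X ⊕ ℕ → X × ℝ := Sum.elim (fun x => (x, 0)) (pt d)

lemma param_injective : Injective (param d) := by
  have hpos : ∀ n : ℕ, (0 : ℝ) < 1 / (n + 1 : ℝ) := fun n => Nat.one_div_pos_of_nat
  rintro (x | m) (y | n) h <;>
    simp only [param, pt, Sum.elim_inl, Sum.elim_inr, Prod.mk.injEq] at h
  · rw [h.1]
  · exact absurd h.2 (hpos n).ne
  · exact absurd h.2 (hpos m).ne'
  · rw [strictAnti_one_div_add_one.injective h.2]

variable [TopologicalSpace X]

lemma range_param : range (param d) = Itilde d := by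
  rw [param, Sum.elim_range]
  congr 1
  ext ⟨x, t⟩
  simp [eq_comm]

noncomputable def equivSum : X ⊕ ℕ ≃ Itilde d :=
  (Equiv.ofInjective _ (param_injective d)).trans (Equiv.setCongr (range_param d))

@[simp]
lemma coe_equivSum (s : X ⊕ ℕ) : (equivSum d s : X × ℝ) = param d s := rfl

lemma isOpen_singleton_equivSum_inr (n : ℕ) : IsOpen {equivSum d (.inr n)} := by
  have hu := strictAnti_one_div_add_one
  have hV : IsOpen (Ioi (1 / (n + 1 + 1 : ℝ)) \ (fun m : ℕ => 1 / (m + 1 : ℝ)) '' Iio n) :=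
    isOpen_Ioi.sdiff ((finite_Iio n).image _).isClosed
  convert hV.preimage (continuous_snd.comp continuous_subtype_val)
  ext q
  obtain ⟨s, rfl⟩ := (equivSum d).surjective q
  simp only [mem_singleton_iff, (equivSum d).injective.eq_iff, mem_preimage, comp_apply,
    coe_equivSum, Set.mem_sdiff]
  cases s with
  | inl x =>
    exact iff_of_false Sum.inl_ne_inr fun h =>
      (show (0 : ℝ) < 1 / (n + 1 + 1) by positivity).not_gt h.1
  | inr m =>
    have hlt := hu.lt_iff_gt (a := n + 1) (b := m)
    have hmem := hu.injective.mem_set_image (s := Iio n) (a := m)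
    simp only [Nat.cast_add, Nat.cast_one] at hlt hmem
    simp only [param, pt, Sum.elim_inr, Sum.inr.injEq, mem_Ioi, hlt, hmem, mem_Iio]
    omega

lemma eventually_ne_equivSum_inr (x : X) (N : ℕ) :
    ∀ᶠ q in 𝓝 (equivSum d (.inl x)), ∀ n < N, q ≠ equivSum d (.inr n) := by
  refine (finite_Iio N).eventually_all.2 fun n _ => ?_
  have : (equivSum d (.inl x) : X × ℝ).2 ≠ (equivSum d (.inr n) : X × ℝ).2 :=
    (Nat.one_div_pos_of_nat (α := ℝ) (n := n)).ne
  filter_upwards [(continuous_snd.comp continuous_subtype_val).continuousAt.eventually_ne this]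
    with q hq using fun h => hq (h ▸ rfl)

noncomputable def relabel (e : ℕ ≃ ℕ) : Itilde d ≃ Itilde d' :=
  (equivSum d).symm.trans ((Equiv.sumCongr (Equiv.refl X) e).trans (equivSum d'))

lemma relabel_equivSum (e : ℕ ≃ ℕ) (s : X ⊕ ℕ) :
    relabel d d' e (equivSum d s) = equivSum d' (Sum.map id e s) := by
  simp [relabel, Equiv.sumCongr_apply]

lemma relabel_symm (e : ℕ ≃ ℕ) : (relabel d d' e).symm = relabel d' d e.symm := by
  refine Equiv.ext fun q => ?_
  obtain ⟨s, rfl⟩ := (equivSum d').surjective q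
  rw [Equiv.symm_apply_eq, relabel_equivSum, relabel_equivSum, Sum.map_map]
  cases s <;> simp

end Parametrization

section Metric

variable {X : Type*} [MetricSpace X] {d d' : ℕ → X}

lemma continuous_relabel {e : ℕ ≃ ℕ}
    (he : Tendsto (fun n => dist (pt d n) (pt d' (e n))) atTop (𝓝 0)) :
    Continuous (relabel d d' e) := by
  refine continuous_iff_continuousAt.2 fun q => ?_
  obtain ⟨s, rfl⟩ := (equivSum d).surjective q
  cases s with
  | inr n =>
    rw [ContinuousAt, (isOpen_singleton_iff_nhds_eq_pure _).1 (isOpen_singleton_equivSum_inr d n)]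
    exact tendsto_pure_nhds _ _
  | inl x =>
    have hmove : Tendsto (fun q : Itilde d => dist (q : X × ℝ) (relabel d d' e q))
        (𝓝 (equivSum d (.inl x))) (𝓝 0) := by
      refine tendsto_def.2 fun U hU => ?_
      obtain ⟨N, hN⟩ := eventually_atTop.1 (he hU)
      filter_upwards [eventually_ne_equivSum_inr d x N] with q hq
      obtain ⟨s, rfl⟩ := (equivSum d).surjective q
      cases s with
      | inl y => simpa [relabel_equivSum, param] using mem_of_mem_nhds hU
      | inr n => simpa [relabel_equivSum, param] using hN n (not_lt.1 fun h => hq n h rfl)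
    rw [ContinuousAt, tendsto_subtype_rng]
    simpa [relabel_equivSum, param] using (continuous_subtype_val.tendsto _).congr_dist hmove

lemma tendsto_dist_pt_symm {e : ℕ ≃ ℕ}
    (he : Tendsto (fun n => dist (pt d n) (pt d' (e n))) atTop (𝓝 0)) :
    Tendsto (fun n => dist (pt d' n) (pt d (e.symm n))) atTop (𝓝 0) := by
  simpa [comp_def, dist_comm] using he.comp e.symm.injective.nat_tendsto_atTop

lemma dist_pt_le {n m : ℕ} (h : dist (d n) (d' m) ≤ 1 / (n + 1 : ℝ) + 1 / (m + 1 : ℝ)) :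
    dist (pt d n) (pt d' m) ≤ 1 / (n + 1 : ℝ) + 1 / (m + 1 : ℝ) := by
  rw [Prod.dist_eq]
  refine max_le h ?_
  rw [pt, pt, Real.dist_eq]
  refine (abs_sub _ _).trans_eq ?_
  rw [abs_of_pos (by positivity), abs_of_pos (by positivity)]

end Metric

end Itilde

open Itilde

section Matching

variable {X : Type*} [MetricSpace X]

lemma exists_strictMono_dist_lt {d d' : ℕ → X} (hdense : ∀ n, d n ∈ closure (range d'))
    (hrep : ∀ m, {k | d' k = d' m}.Infinite) :
    ∃ φ : ℕ → ℕ, StrictMono φ ∧ ∀ n, dist (d n) (d' (φ n)) < 1 / (n + 1 : ℝ) := by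
  refine extraction_forall_of_frequently (P := fun n k => dist (d n) (d' k) < 1 / (n + 1 : ℝ))
    fun n => ?_
  obtain ⟨_, ⟨m, rfl⟩, hm⟩ := Metric.mem_closure_iff.1 (hdense n) _ Nat.one_div_pos_of_nat
  refine Nat.frequently_atTop_iff_infinite.2 ((hrep m).mono fun k hk => ?_)
  rwa [mem_ofPred_eq, hk]

lemma Admissible.exists_equiv_tendsto_dist_pt {A : Set X} {d d' : ℕ → X}
    (hd : Admissible A d) (hd' : Admissible A d') :
    ∃ e : ℕ ≃ ℕ, Tendsto (fun n => dist (pt d n) (pt d' (e n))) atTop (𝓝 0) := by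
  obtain ⟨f, hf, hfd⟩ := exists_strictMono_dist_lt (fun n => hd'.2.1 (hd.1 n)) hd'.2.2
  obtain ⟨g, hg, hgd⟩ := exists_strictMono_dist_lt (fun n => hd.2.1 (hd'.1 n)) hd.2.2
  have hpos : ∀ n : ℕ, (0 : ℝ) < 1 / (n + 1 : ℝ) := fun n => Nat.one_div_pos_of_nat
  obtain ⟨h, hbij, hclose⟩ := Embedding.schroeder_bernstein_of_rel hf.injective hg.injective
    (fun n m => dist (d n) (d' m) ≤ 1 / (n + 1 : ℝ) + 1 / (m + 1 : ℝ))
    (fun n => (hfd n).le.trans (le_add_of_nonneg_right (hpos _).le))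
    (fun m => (dist_comm (d (g m)) _ ▸ hgd m).le.trans (le_add_of_nonneg_left (hpos _).le))
  refine ⟨Equiv.ofBijective h hbij, squeeze_zero (fun _ => dist_nonneg)
    (fun n => dist_pt_le (hclose n)) ?_⟩
  have hu : Tendsto (fun n : ℕ => 1 / (n + 1 : ℝ)) atTop (𝓝 0) :=
    tendsto_one_div_add_atTop_nhds_zero_nat
  simpa using hu.add (hu.comp hbij.injective.nat_tendsto_atTop)

end Matching

theorem Itilde_independent_of_sequence_general
    {X : Type*} [MetricSpace X]
    {A : Set X}
    {d d' : ℕ → X} (hd : Admissible A d) (hd' : Admissible A d') :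
    ∃ f : (Itilde d : Type _) ≃ₜ (Itilde d' : Type _),
      ∀ x : X, (f ⟨(x, 0), Or.inl (Set.mk_mem_prod (Set.mem_univ x) rfl)⟩ : X × ℝ)
        = (x, 0) := by
  obtain ⟨e, he⟩ := hd.exists_equiv_tendsto_dist_pt hd'
  refine ⟨⟨relabel d d' e, continuous_relabel he, ?_⟩, fun x => ?_⟩
  · show Continuous (relabel d d' e).symm
    rw [relabel_symm]
    exact continuous_relabel (tendsto_dist_pt_symm he)
  · exact congrArg Subtype.val (relabel_equivSum d d' e (.inl x))

/-- for two admissible sequences `d, d'` in `A` there is a homeomorphism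
`I_d(X,A) → I_{d'}(X,A)` fixing `X × {0}` pointwise; so `I(X,A)` is well defined up to
homeomorphism. -/
theorem Itilde_independent_of_sequence
    {X : Type*} [MetricSpace X] [CompactSpace X]
    {A : Set X} (hA : IsClosed A)
    (hAiso : ∀ x : X, IsOpen ({x} : Set X) → x ∈ A)
    {d d' : ℕ → X} (hd : Admissible A d) (hd' : Admissible A d') :
    ∃ f : (Itilde d : Type _) ≃ₜ (Itilde d' : Type _),
      ∀ x : X, (f ⟨(x, 0), Or.inl (Set.mk_mem_prod (Set.mem_univ x) rfl)⟩ : X × ℝ)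
        = (x, 0) :=
  Itilde_independent_of_sequence_general hd hd'
end

section
/- There exists a Borel measurable map 𝕀 from {(X, A) ∈ K(Q) × K(Q) : A ⊆ X} to K(Q × [0,1]) such that for every pair (X, A) in the domain there is a sequence d : {1,2,...} → A whose range is dense in A and each of whose values is attained at infinitely many indices, with 𝕀(X, A) = (X × {0}) ∪ {(d_n, 1/n) : n ≥ 1}. -/
open Set Topology TopologicalSpace

/-- A (non-canonical) metric on the Hilbert cube inducing the product topology. -/
noncomputable instance : MetricSpace Q := PiCountable.metricSpace

noncomputable instance : MeasurableSpace (NonemptyCompacts Q) := borel _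
instance : BorelSpace (NonemptyCompacts Q) := ⟨rfl⟩

noncomputable instance : MeasurableSpace (NonemptyCompacts (Q × unitInterval)) := borel _
instance : BorelSpace (NonemptyCompacts (Q × unitInterval)) := ⟨rfl⟩

/-- The point `1/n ∈ [0,1]` (indexed by `n : ℕ`, as `1/(n+1)`). -/
noncomputable def un (n : ℕ) : unitInterval :=
  ⟨1 / (n + 1 : ℝ), by
    constructor
    · positivity
    · rw [div_le_one (by positivity)]
      have : (0 : ℝ) ≤ (n : ℝ) := Nat.cast_nonneg n
      linarith⟩


/-!
Fix a continuous surjection `φ` from Cantor space onto `Q` (Hausdorff–Alexandroff). For a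
closed set `C` of Cantor space, the lexicographically least point of `φ ⁻¹' A ∩ C` is found
digit by digit, each digit being decided by whether some closed set meets `φ ⁻¹' A`, i.e. whether
`A` meets a compact subset of `Q`; this is a closed condition on `A`, so the selected point
depends measurably on `A`. Letting `C` run over a countable base of cylinders gives a dense
sequence in `A`, and reindexing along `Nat.unpair` repeats each of its values infinitely often.
The comb `(X × {0}) ∪ {(dₙ, 1/n)}` is the Hausdorff limit of its finite truncations, which depend
continuously on `(X, d)`, hence it is a Borel function of `(X, A)`.
-/

open Filter

section LexMin

open scoped Classical

/-- The points of `S` whose first `n` digits are the lexicographically least ones available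
in `S`. -/
noncomputable def lexMinStage (S : Set (ℕ → Bool)) : ℕ → Set (ℕ → Bool)
  | 0 => S
  | n + 1 =>
    if (lexMinStage S n ∩ {x | x n = false}).Nonempty then lexMinStage S n ∩ {x | x n = false}
    else lexMinStage S n

noncomputable def lexMin (S : Set (ℕ → Bool)) : ℕ → Bool :=
  fun n => !decide (lexMinStage S n ∩ {x | x n = false}).Nonempty

variable {S : Set (ℕ → Bool)}

lemma lexMinStage_succ_subset (S : Set (ℕ → Bool)) (n : ℕ) :
    lexMinStage S (n + 1) ⊆ lexMinStage S n := by
  rw [lexMinStage]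
  split_ifs
  exacts [inter_subset_left, subset_rfl]

lemma lexMinStage_nonempty (hS : S.Nonempty) : ∀ n, (lexMinStage S n).Nonempty
  | 0 => hS
  | n + 1 => by
    rw [lexMinStage]
    split_ifs with h
    exacts [h, lexMinStage_nonempty hS n]

lemma isClosed_lexMinStage (hS : IsClosed S) : ∀ n, IsClosed (lexMinStage S n)
  | 0 => hS
  | n + 1 => by
    rw [lexMinStage]
    split_ifs
    exacts [(isClosed_lexMinStage hS n).inter (isClosed_eq (continuous_apply n) continuous_const),
      isClosed_lexMinStage hS n]

lemma apply_eq_lexMin_of_mem_lexMinStage {x : ℕ → Bool} {n : ℕ}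
    (hx : x ∈ lexMinStage S (n + 1)) : x n = lexMin S n := by
  rw [lexMinStage] at hx
  split_ifs at hx with h
  · simpa [lexMin, h] using hx.2
  · simp only [lexMin, h, decide_false, Bool.not_false]
    by_contra hxn
    exact h ⟨x, hx, by simpa using hxn⟩

theorem lexMin_mem (hS : IsClosed S) (hne : S.Nonempty) : lexMin S ∈ S := by
  obtain ⟨y, hy⟩ := IsCompact.nonempty_iInter_of_sequence_nonempty_isCompact_isClosed
    (lexMinStage S) (lexMinStage_succ_subset S) (lexMinStage_nonempty hne)
    (isClosed_lexMinStage hS 0).isCompact (isClosed_lexMinStage hS)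
  have hy_eq : y = lexMin S :=
    funext fun n => apply_eq_lexMin_of_mem_lexMinStage (mem_iInter.1 hy (n + 1))
  exact hy_eq ▸ mem_iInter.1 hy 0

end LexMin

def HitMeasurable {β γ : Type*} [MeasurableSpace β] [TopologicalSpace γ] (S : β → Set γ) : Prop :=
  ∀ T : Set γ, IsClosed T → MeasurableSet {b | (S b ∩ T).Nonempty}

namespace HitMeasurable

variable {β γ : Type*} [MeasurableSpace β] [TopologicalSpace γ] {S S' : β → Set γ}

lemma inter_isClosed (hS : HitMeasurable S) {C : Set γ} (hC : IsClosed C) :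
    HitMeasurable fun b => S b ∩ C :=
  fun T hT => by simpa only [inter_assoc] using hS _ (hC.inter hT)

lemma ite {p : β → Prop} [DecidablePred p] (hp : MeasurableSet {b | p b})
    (hS : HitMeasurable S) (hS' : HitMeasurable S') :
    HitMeasurable fun b => if p b then S b else S' b := by
  intro T hT
  convert hp.ite (hS T hT) (hS' T hT) using 1
  ext b
  by_cases h : p b <;> simp [Set.ite, h]

open scoped Classical in
lemma lexMinStage {S : β → Set (ℕ → Bool)} (hS : HitMeasurable S) (n : ℕ) :
    HitMeasurable fun b => lexMinStage (S b) n := by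
  induction n with
  | zero => exact hS
  | succ n ih =>
    have hF : IsClosed {x : ℕ → Bool | x n = false} :=
      isClosed_eq (continuous_apply n) continuous_const
    exact HitMeasurable.ite (ih _ hF) (ih.inter_isClosed hF) ih

lemma measurable_lexMin {S : β → Set (ℕ → Bool)} (hS : HitMeasurable S) :
    Measurable fun b => lexMin (S b) := by
  refine measurable_pi_lambda _ fun n => measurable_to_bool ?_
  have hF : IsClosed {x : ℕ → Bool | x n = false} :=
    isClosed_eq (continuous_apply n) continuous_const
  convert ((hS.lexMinStage n) _ hF).compl using 1
  ext b
  simp [lexMin]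

end HitMeasurable

section CantorSelector

variable {α : Type*} [TopologicalSpace α] {φ : (ℕ → Bool) → α}

open scoped Classical in
/-- The image of the lexicographically least point of `φ ⁻¹' K ∩ C`, or of `φ ⁻¹' K` if that
intersection is empty. -/
noncomputable def cantorSel (φ : (ℕ → Bool) → α) (C : Set (ℕ → Bool)) (K : NonemptyCompacts α) :
    α :=
  φ (lexMin (if (φ ⁻¹' K ∩ C).Nonempty then φ ⁻¹' K ∩ C else φ ⁻¹' K))

lemma cantorSel_mem [T2Space α] (hφ : Continuous φ) (hφs : Function.Surjective φ)
    {C : Set (ℕ → Bool)} (hC : IsClosed C) (K : NonemptyCompacts α) : cantorSel φ C K ∈ K := by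
  have hK : IsClosed (φ ⁻¹' K) := K.isCompact.isClosed.preimage hφ
  rw [cantorSel]
  split_ifs with h
  exacts [(lexMin_mem (hK.inter hC) h).1, lexMin_mem hK (K.nonempty.preimage hφs)]

lemma cantorSel_mem_image [T2Space α] (hφ : Continuous φ) {C : Set (ℕ → Bool)} (hC : IsClosed C)
    {K : NonemptyCompacts α} (h : (φ ⁻¹' K ∩ C).Nonempty) : cantorSel φ C K ∈ φ '' C := by
  rw [cantorSel, if_pos h]
  exact mem_image_of_mem φ (lexMin_mem ((K.isCompact.isClosed.preimage hφ).inter hC) h).2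

lemma hitMeasurable_preimage [T2Space α] [MeasurableSpace (NonemptyCompacts α)]
    [OpensMeasurableSpace (NonemptyCompacts α)] (hφ : Continuous φ) :
    HitMeasurable fun K : NonemptyCompacts α => φ ⁻¹' K := by
  intro T hT
  have hclosed := NonemptyCompacts.isClosed_inter_nonempty_of_isClosed
    (hT.isCompact.image hφ).isClosed
  simp only [inter_comm _ (φ '' T), image_inter_nonempty_iff] at hclosed
  simpa only [inter_comm] using hclosed.measurableSet

lemma measurable_cantorSel [T2Space α] [MeasurableSpace α] [BorelSpace α]
    [MeasurableSpace (NonemptyCompacts α)] [OpensMeasurableSpace (NonemptyCompacts α)]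
    (hφ : Continuous φ) {C : Set (ℕ → Bool)} (hC : IsClosed C) :
    Measurable (cantorSel φ C) := by
  classical
  have hpre := hitMeasurable_preimage hφ (α := α)
  exact hφ.measurable.comp
    (HitMeasurable.ite (hpre C hC) (hpre.inter_isClosed hC) hpre).measurable_lexMin

lemma PiNat.isClosed_cylinder {E : ℕ → Type*} [∀ n, TopologicalSpace (E n)]
    [∀ n, DiscreteTopology (E n)] (x : ∀ n, E n) (n : ℕ) : IsClosed (PiNat.cylinder x n) := by
  rw [PiNat.cylinder_eq_pi]
  exact isClosed_set_pi fun _ _ => isClosed_singleton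

lemma subset_closure_range_cantorSel [T2Space α] (hφ : Continuous φ)
    (hφs : Function.Surjective φ) {u : ℕ → ℕ → Bool} (hu : DenseRange u) (K : NonemptyCompacts α) :
    (K : Set α) ⊆ closure (range fun i : ℕ × ℕ => cantorSel φ (PiNat.cylinder (u i.1) i.2) K) := by
  intro a ha
  rw [mem_closure_iff]
  intro U hU haU
  obtain ⟨x, rfl⟩ := hφs a
  obtain ⟨-, ⟨y, n, rfl⟩, hxy, hyU⟩ :=
    (PiNat.isTopologicalBasis_cylinders _).exists_subset_of_mem_open haU (hU.preimage hφ)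
  obtain ⟨k, hk⟩ := hu.exists_mem_open (PiNat.isOpen_cylinder _ y n) ⟨x, hxy⟩
  have hcyl : PiNat.cylinder (u k) n = PiNat.cylinder y n := PiNat.mem_cylinder_iff_eq.1 hk
  obtain ⟨z, hz, hzsel⟩ := cantorSel_mem_image hφ (PiNat.isClosed_cylinder (u k) n)
    (K := K) (hcyl ▸ ⟨x, ha, hxy⟩)
  exact ⟨_, (hzsel ▸ hyU (hcyl ▸ hz) : cantorSel φ _ K ∈ U), (k, n), rfl⟩

end CantorSelector

lemma exists_surjective_nat_infinite_fibers (ι : Type*) [Countable ι] [Nonempty ι] :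
    ∃ e : ℕ → ι, Function.Surjective e ∧ ∀ n, {m | e m = e n}.Infinite := by
  obtain ⟨g, hg⟩ := exists_surjective_nat ι
  refine ⟨fun m => g m.unpair.1, fun i => ?_, fun n => ?_⟩
  · obtain ⟨k, rfl⟩ := hg i
    exact ⟨Nat.pair k 0, by simp⟩
  · refine infinite_of_injective_forall_mem (f := fun j => Nat.pair n.unpair.1 j) ?_ fun j => ?_
    · intro a b hab
      simpa using congrArg (fun m => m.unpair.2) hab
    · simp

theorem exists_measurable_dense_selectors (α : Type*) [MetricSpace α] [CompactSpace α]
    [Nonempty α] [MeasurableSpace α] [BorelSpace α] [MeasurableSpace (NonemptyCompacts α)]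
    [OpensMeasurableSpace (NonemptyCompacts α)] :
    ∃ s : ℕ → NonemptyCompacts α → α, (∀ n, Measurable (s n)) ∧ ∀ K : NonemptyCompacts α,
      (∀ n, s n K ∈ K) ∧ (K : Set α) ⊆ closure (range fun n => s n K) ∧
        ∀ n, {m | s m K = s n K}.Infinite := by
  obtain ⟨φ, hφ, hφs⟩ := exists_nat_bool_continuous_surjective_of_compact α
  obtain ⟨u, hu⟩ := TopologicalSpace.exists_dense_seq (ℕ → Bool)
  obtain ⟨e, he, hfib⟩ := exists_surjective_nat_infinite_fibers (ℕ × ℕ)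
  refine ⟨fun m => cantorSel φ (PiNat.cylinder (u (e m).1) (e m).2),
    fun m => measurable_cantorSel hφ (PiNat.isClosed_cylinder _ _), fun K => ⟨fun m =>
      cantorSel_mem hφ hφs (PiNat.isClosed_cylinder _ _) K, ?_, fun n =>
      (hfib n).mono fun m (hm : e m = e n) => by simp [hm]⟩⟩
  exact (subset_closure_range_cantorSel hφ hφs hu K).trans_eq
    (congrArg closure (he.range_comp _).symm)

section Comb

variable {α : Type*} [MetricSpace α]

lemma un_antitone : Antitone un := fun m n hmn => by
  change 1 / ((n : ℝ) + 1) ≤ 1 / ((m : ℝ) + 1)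
  gcongr

lemma tendsto_un : Tendsto un atTop (𝓝 0) :=
  tendsto_subtype_rng.2 tendsto_one_div_add_atTop_nhds_zero_nat

/-- The paper's `𝕀(X, A) = (X × {0}) ∪ {(dₙ, 1/n)}`, with `d` a sequence in `A`. -/
def combSet (X : Set α) (d : ℕ → α) : Set (α × unitInterval) :=
  (fun x => (x, (0 : unitInterval))) '' X ∪ range fun n => (d n, un n)

/-- Beyond index `N` the points `(d n, un n)` lie in the closed strip `X × [0, un N]`, so the
closure of the comb adds only points of height `0` above `X`. -/
lemma isClosed_combSet {X : Set α} (hX : IsClosed X) {d : ℕ → α} (hd : ∀ n, d n ∈ X) :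
    IsClosed (combSet X d) := by
  have hcover : ∀ N, combSet X d ⊆ X ×ˢ Iic (un N) ∪ (fun n => (d n, un n)) '' Iio N := by
    rintro N _ (⟨x, hx, rfl⟩ | ⟨n, rfl⟩)
    · exact Or.inl ⟨hx, unitInterval.nonneg (un N)⟩
    · rcases lt_or_ge n N with hn | hn
      · exact Or.inr ⟨n, hn, rfl⟩
      · exact Or.inl ⟨hd n, un_antitone hn⟩
  refine isClosed_of_closure_subset fun z hz => ?_
  have hzN : ∀ N, z ∈ X ×ˢ Iic (un N) ∪ (fun n => (d n, un n)) '' Iio N := fun N =>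
    closure_minimal (hcover N) ((hX.prod isClosed_Iic).union
      ((finite_Iio N).image _).isClosed) hz
  by_cases htooth : ∃ N, z ∈ (fun n => (d n, un n)) '' Iio N
  · obtain ⟨N, n, -, rfl⟩ := htooth
    exact Or.inr ⟨n, rfl⟩
  · push Not at htooth
    have hbase : ∀ N, z.1 ∈ X ∧ z.2 ≤ un N := fun N => (hzN N).resolve_right (htooth N)
    have hz2 : z.2 = 0 := le_antisymm (ge_of_tendsto' tendsto_un fun N => (hbase N).2)
      (unitInterval.nonneg _)
    exact Or.inl ⟨z.1, (hbase 0).1, Prod.ext rfl hz2.symm⟩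

def comb (X : NonemptyCompacts α) (d : ℕ → α) (hd : ∀ n, d n ∈ X) :
    NonemptyCompacts (α × unitInterval) where
  carrier := combSet X d
  isCompact' := (X.isCompact.prod isCompact_univ).of_isClosed_subset
    (isClosed_combSet X.isCompact.isClosed hd) (by
      rintro _ (⟨x, hx, rfl⟩ | ⟨n, rfl⟩)
      exacts [⟨hx, trivial⟩, ⟨hd n, trivial⟩])
  nonempty' := X.nonempty.image _ |>.mono subset_union_left

noncomputable def combTrunc (X : NonemptyCompacts α) (d : ℕ → α) :
    ℕ → NonemptyCompacts (α × unitInterval)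
  | 0 => X.map (fun x => (x, (0 : unitInterval))) (by fun_prop)
  | m + 1 => combTrunc X d m ⊔ {(d m, un m)}

lemma coe_combTrunc (X : NonemptyCompacts α) (d : ℕ → α) (m : ℕ) :
    (combTrunc X d m : Set (α × unitInterval)) =
      (fun x => (x, (0 : unitInterval))) '' X ∪ (fun n => (d n, un n)) '' Iio m := by
  induction m with
  | zero => simp [combTrunc]
  | succ m ih =>
    rw [combTrunc, NonemptyCompacts.coe_sup, ih, ← Order.succ_eq_add_one, Order.Iio_succ_eq_insert,
      image_insert_eq, union_insert, NonemptyCompacts.coe_singleton, union_singleton]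

lemma continuous_combTrunc (m : ℕ) :
    Continuous fun P : NonemptyCompacts α × (ℕ → α) => combTrunc P.1 P.2 m := by
  induction m with
  | zero => exact (Continuous.nonemptyCompacts_map (by fun_prop)).comp continuous_fst
  | succ m ih =>
    exact ih.sup (NonemptyCompacts.continuous_singleton.comp (by fun_prop))

lemma dist_combTrunc_comb_le (X : NonemptyCompacts α) {d : ℕ → α} (hd : ∀ n, d n ∈ X) (m : ℕ) :
    dist (combTrunc X d m) (comb X d hd) ≤ un m := by
  rw [Metric.NonemptyCompacts.dist_eq, coe_combTrunc]
  refine Metric.hausdorffDist_le_of_mem_dist (unitInterval.nonneg _)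
    (fun z hz => ⟨z, ?_, by simp [unitInterval.nonneg]⟩) ?_
  · rcases hz with hz | ⟨n, -, rfl⟩
    exacts [Or.inl hz, Or.inr ⟨n, rfl⟩]
  rintro _ (⟨x, hx, rfl⟩ | ⟨n, rfl⟩)
  · exact ⟨_, Or.inl ⟨x, hx, rfl⟩, by simp [unitInterval.nonneg]⟩
  rcases lt_or_ge n m with hn | hn
  · exact ⟨_, Or.inr ⟨n, hn, rfl⟩, by simp [unitInterval.nonneg]⟩
  · refine ⟨_, Or.inl ⟨d n, hd n, rfl⟩, ?_⟩
    simpa [Prod.dist_eq, Subtype.dist_eq, abs_of_nonneg (unitInterval.nonneg _)]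
      using ⟨unitInterval.nonneg _, un_antitone hn⟩

theorem measurable_comb {β : Type*} [SecondCountableTopology α]
    [MeasurableSpace α] [BorelSpace α] [MeasurableSpace (NonemptyCompacts α)]
    [BorelSpace (NonemptyCompacts α)] [MeasurableSpace (NonemptyCompacts (α × unitInterval))]
    [BorelSpace (NonemptyCompacts (α × unitInterval))] [MeasurableSpace β]
    {X : β → NonemptyCompacts α} {d : β → ℕ → α} (hX : Measurable X) (hdm : Measurable d)
    (hd : ∀ b n, d b n ∈ X b) :
    Measurable fun b => comb (X b) (d b) (hd b) := by
  refine measurable_of_tendsto_metrizable (f := fun m b => combTrunc (X b) (d b) m)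
    (fun m => (continuous_combTrunc m).measurable.comp (hX.prodMk hdm))
    (tendsto_pi_nhds.2 fun b => tendsto_iff_dist_tendsto_zero.2 ?_)
  exact squeeze_zero (fun _ => dist_nonneg) (dist_combTrunc_comb_le (X b) (hd b))
    tendsto_one_div_add_atTop_nhds_zero_nat

end Comb

/-- there is a Borel map `𝕀` on `{(X, A) ∈ K(Q)² : A ⊆ X}` with values in
`K(Q × [0,1])` such that `𝕀(X,A) = (X × {0}) ∪ {(d_n, 1/n)}` for some sequence `d` in `A`
with dense range attaining each value infinitely often. -/
theorem exists_borel_Itilde_map :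
    ∃ F : {p : NonemptyCompacts Q × NonemptyCompacts Q // (p.2 : Set Q) ⊆ (p.1 : Set Q)} →
        NonemptyCompacts (Q × unitInterval),
      Measurable F ∧
      ∀ p, ∃ d : ℕ → Q,
        (∀ n, d n ∈ (p.1.2 : Set Q)) ∧
        (p.1.2 : Set Q) ⊆ closure (Set.range d) ∧
        (∀ n, {m : ℕ | d m = d n}.Infinite) ∧
        (F p : Set (Q × unitInterval)) =
          (fun x => (x, (0 : unitInterval))) '' (p.1.1 : Set Q) ∪
            Set.range (fun n : ℕ => (d n, un n)) := by
  obtain ⟨s, hs_meas, hs⟩ := exists_measurable_dense_selectors Q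
  have hmem : ∀ (p : {p : NonemptyCompacts Q × NonemptyCompacts Q // (p.2 : Set Q) ⊆ p.1}) n,
      s n p.1.2 ∈ p.1.1 := fun p n => p.2 ((hs p.1.2).1 n)
  refine ⟨fun p => comb p.1.1 (fun n => s n p.1.2) (hmem p), ?_, fun p =>
    ⟨fun n => s n p.1.2, (hs p.1.2).1, (hs p.1.2).2.1, (hs p.1.2).2.2, rfl⟩⟩
  have hA : Measurable fun p : {p : NonemptyCompacts Q × NonemptyCompacts Q //
      (p.2 : Set Q) ⊆ p.1} => p.1.2 := measurable_snd.comp measurable_subtype_coe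
  exact measurable_comb (measurable_fst.comp measurable_subtype_coe)
    (measurable_pi_lambda _ fun n => (hs_meas n).comp hA) hmem
end

section
/- Let A = (A_n)_{n∈ℕ} and B = (B_n)_{n∈ℕ} be sequences of compact subsets of the Hilbert cube Q, and form 𝔸, 𝔹 ⊆ 𝕏 from them. Then the following are equivalent: (i) there exist a homeomorphism f : Q → Q and a permutation σ of ℕ such that f(A_n) = B_{σ(n)} for all n; (ii) there exists a homeomorphism g : 𝕏 → 𝕏 such that g(𝔸) = 𝔹 and g(Q × {0⃗}) = Q × {0⃗}. -/
open Set Topology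

/-- `𝕏 = {(x,y) ∈ Q × Q : y_m ≠ 0 for at most one index m}`. -/
def XX : Set (Q × Q) := {p | {m : ℕ | p.2 m ≠ 0}.Subsingleton}

/-- For a sequence `A` of subsets of `Q`, the set `𝔸 = {(x,y) ∈ 𝕏 : ∀ n, y_n = 0 ∨ x ∈ A_n}`. -/
def AA (A : ℕ → Set Q) : Set ↥XX :=
  {p | ∀ n : ℕ, (p : Q × Q).2 n = 0 ∨ (p : Q × Q).1 ∈ A n}

/-- The copy `Q × {0⃗}` of `Q` inside `𝕏`. -/
def QQ0 : Set ↥XX := {p | (p : Q × Q).2 = 0}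

section Aux
open Filter


lemma prodext {α β : Type*} {p q : α × β} (h1 : p.1 = q.1) (h2 : p.2 = q.2) : p = q := by
  cases p; cases q; cases h1; cases h2; rfl


def q0 (x : Q) : ↥XX :=
  ⟨(x, 0), by intro m hm; simp at hm⟩

lemma continuous_q0 : Continuous q0 :=
  Continuous.subtype_mk (continuous_id.prodMk continuous_const) _

def pt (n : ℕ) (x : Q) (t : unitInterval) : ↥XX :=
  ⟨(x, fun m => if m = n then t else 0), by
    intro a ha b hb
    simp only [mem_setOf_eq] at ha hb
    by_cases h : a = n
    · by_cases h' : b = n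
      · rw [h, h']
      · simp [h'] at hb
    · simp [h] at ha⟩

lemma pt_zero (n : ℕ) (x : Q) : pt n x 0 = q0 x := by
  apply Subtype.ext
  refine prodext rfl ?_
  funext m
  simp only [pt, q0]
  split <;> rfl

lemma continuous_pt2 (n : ℕ) : Continuous (fun z : Q × unitInterval => pt n z.1 z.2) := by
  apply Continuous.subtype_mk
  apply Continuous.prodMk continuous_fst
  apply continuous_pi
  intro m
  by_cases h : m = n
  · simpa [h] using continuous_snd
  · simpa [h] using continuous_const

lemma continuous_pt (n : ℕ) (x : Q) : Continuous (pt n x) :=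
  (continuous_pt2 n).comp (continuous_const.prodMk continuous_id)

def V (n : ℕ) : Set ↥XX := {p | (p : Q × Q).2 n ≠ 0}

lemma V_disjoint {p : ↥XX} {n m : ℕ} (hn : p ∈ V n) (hm : p ∈ V m) : n = m :=
  p.2 hn hm

lemma isOpen_V (n : ℕ) : IsOpen (V n) := by
  have hc : Continuous fun p : ↥XX => (p : Q × Q).2 n :=
    (continuous_apply n).comp (continuous_snd.comp continuous_subtype_val)
  exact isOpen_compl_singleton.preimage hc

lemma pt_mem_V (n : ℕ) (x : Q) {t : unitInterval} (ht : t ≠ 0) : pt n x t ∈ V n := by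
  simp [pt, V, ht]

lemma uI_one_ne_zero : (1 : unitInterval) ≠ 0 := by
  intro h
  have := congrArg Subtype.val h
  norm_num at this

lemma mem_V_not_QQ0 {p : ↥XX} {n : ℕ} (h : p ∈ V n) : p ∉ QQ0 := by
  intro h0
  exact h (congrFun h0 n)

lemma not_QQ0_exists {p : ↥XX} (h : p ∉ QQ0) : ∃ m, p ∈ V m := by
  by_contra h'
  push_neg at h'
  exact h (funext fun m => not_not.mp (h' m))

lemma isPreconnected_V (n : ℕ) : IsPreconnected (V n) := by
  have hrange : V n = range (fun z : Q × ↥(Ioc (0:ℝ) 1) =>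
      pt n z.1 ⟨z.2.1, ⟨z.2.2.1.le, z.2.2.2⟩⟩) := by
    ext p
    constructor
    · intro hp
      have h1 : (0:ℝ) < ((p : Q × Q).2 n : ℝ) := by
        have h0 : (0:ℝ) ≤ ((p : Q × Q).2 n : ℝ) := ((p : Q × Q).2 n).2.1
        rcases h0.lt_or_eq with h | h
        · exact h
        · exact absurd (Subtype.ext h.symm : (p : Q × Q).2 n = 0) hp
      refine ⟨((p : Q × Q).1, ⟨((p : Q × Q).2 n : ℝ), ⟨h1, ((p : Q × Q).2 n).2.2⟩⟩), ?_⟩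
      apply Subtype.ext
      refine prodext rfl ?_
      funext m
      by_cases h : m = n
      · subst h; simp [pt]
      · simp only [pt, if_neg h]
        by_contra hne
        have hm : p ∈ V m := fun h0 => hne h0.symm
        exact h (V_disjoint hm hp)
    · rintro ⟨⟨x, t⟩, rfl⟩
      apply pt_mem_V
      intro h
      have := congrArg Subtype.val h
      exact absurd this (ne_of_gt t.2.1)
  rw [hrange]
  haveI : PreconnectedSpace ↥(Ioc (0:ℝ) 1) :=
    Subtype.preconnectedSpace isPreconnected_Ioc
  exact isPreconnected_range <| (continuous_pt2 n).comp <|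
    continuous_fst.prodMk (Continuous.subtype_mk (continuous_subtype_val.comp continuous_snd) _)

/-- Key lemma: the image of a whisker under a homeomorphism preserving `QQ0` lies in one whisker. -/
lemma exists_V_image (g : ↥XX ≃ₜ ↥XX) (hQ : ∀ p : ↥XX, g p ∈ QQ0 → p ∈ QQ0) (n : ℕ) :
    ∃ m, g '' V n ⊆ V m := by
  have hS : IsPreconnected (g '' V n) :=
    (isPreconnected_V n).image _ g.continuous.continuousOn
  have hnotQ : ∀ q ∈ g '' V n, q ∉ QQ0 := by
    rintro q ⟨p, hp, rfl⟩ hq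
    exact mem_V_not_QQ0 hp (hQ p hq)
  have hbase : g (pt n 0 1) ∈ g '' V n :=
    mem_image_of_mem _ (pt_mem_V n 0 uI_one_ne_zero)
  obtain ⟨m₀, hm₀⟩ := not_QQ0_exists (hnotQ _ hbase)
  refine ⟨m₀, ?_⟩
  intro q hq
  by_contra hq'
  obtain ⟨m₁, hm₁⟩ := not_QQ0_exists (hnotQ _ hq)
  have hm₁₀ : m₁ ≠ m₀ := fun h => hq' (h ▸ hm₁)
  have hcover : g '' V n ⊆ V m₀ ∪ ⋃ m ∈ {m : ℕ | m ≠ m₀}, V m := by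
    intro r hr
    obtain ⟨m, hm⟩ := not_QQ0_exists (hnotQ _ hr)
    by_cases h : m = m₀
    · exact Or.inl (h ▸ hm)
    · exact Or.inr (mem_biUnion h hm)
  obtain ⟨r, hr, hru, hrv⟩ := hS (V m₀) (⋃ m ∈ {m : ℕ | m ≠ m₀}, V m)
    (isOpen_V m₀) (isOpen_biUnion fun m _ => isOpen_V m) hcover
    ⟨_, hbase, hm₀⟩ ⟨q, hq, mem_biUnion hm₁₀ hm₁⟩
  obtain ⟨m, hm, hrm⟩ := mem_iUnion₂.mp hrv
  exact hm (V_disjoint hrm hru)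

/-- Key limiting lemma for the backward direction. -/
lemma half (g : ↥XX ≃ₜ ↥XX) (A B : ℕ → Set Q) (hB : ∀ n, IsCompact (B n))
    (hAB : ∀ p ∈ AA A, g p ∈ AA B)
    {n m : ℕ} (hnm : g '' V n ⊆ V m) {x : Q} (hx : x ∈ A n) :
    ((g (q0 x) : Q × Q)).1 ∈ B m := by
  set c : unitInterval → Q := fun t => ((g (pt n x t) : Q × Q)).1 with hc
  have hcont : Continuous c :=
    (continuous_fst.comp continuous_subtype_val).comp (g.continuous.comp (continuous_pt n x))
  have hmem : ∀ t : unitInterval, t ≠ 0 → c t ∈ B m := by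
    intro t ht
    have h1 : pt n x t ∈ AA A := by
      intro k
      by_cases hk : k = n
      · exact Or.inr (hk ▸ hx)
      · left; simp [pt, hk]
    have h2 := hAB _ h1
    have h3 : g (pt n x t) ∈ V m := hnm (mem_image_of_mem _ (pt_mem_V n x ht))
    rcases h2 m with h | h
    · exact absurd h h3
    · exact h
  set u : ℕ → unitInterval := fun k => ⟨1/((k:ℝ)+1), by
    constructor
    · positivity
    · rw [div_le_one (by positivity)]
      linarith [Nat.cast_nonneg (α := ℝ) k]⟩ with hu
  have hune : ∀ k, u k ≠ 0 := by
    intro k h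
    have := congrArg Subtype.val h
    simp only [hu] at this
    have hk : (0:ℝ) < 1/((k:ℝ)+1) := by positivity
    rw [this] at hk
    exact lt_irrefl _ hk
  have hu0 : Tendsto u atTop (𝓝 0) := by
    rw [tendsto_subtype_rng]
    exact tendsto_one_div_add_atTop_nhds_zero_nat
  have htend : Tendsto (fun k => c (u k)) atTop (𝓝 (c 0)) :=
    (hcont.tendsto 0).comp hu0
  have hc0 : c 0 = ((g (q0 x) : Q × Q)).1 := by
    rw [hc]; simp only [pt_zero]
  rw [← hc0]
  exact (hB m).isClosed.mem_of_tendsto htend (Eventually.of_forall fun k => hmem _ (hune k))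

lemma image_eq_of_iff (G : ↥XX ≃ₜ ↥XX) {S T : Set ↥XX} (h : ∀ p, p ∈ S ↔ G p ∈ T) :
    G '' S = T := by
  ext q
  constructor
  · rintro ⟨p, hp, rfl⟩; exact (h p).1 hp
  · intro hq
    exact ⟨G.symm q, (h _).2 (by rw [G.apply_symm_apply]; exact hq), G.apply_symm_apply q⟩

/-- The forward homeomorphism of `𝕏` built from `f` and `σ`. -/
def fwdH (f : Q ≃ₜ Q) (σ : Equiv.Perm ℕ) : ↥XX ≃ₜ ↥XX where
  toFun p := ⟨(f (p : Q × Q).1, fun m => (p : Q × Q).2 (σ.symm m)), by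
    intro a ha b hb
    exact σ.symm.injective (p.2 ha hb)⟩
  invFun p := ⟨(f.symm (p : Q × Q).1, fun m => (p : Q × Q).2 (σ m)), by
    intro a ha b hb
    exact σ.injective (p.2 ha hb)⟩
  left_inv p := by
    apply Subtype.ext
    refine prodext ?_ ?_
    · exact f.symm_apply_apply _
    · funext m; simp
  right_inv p := by
    apply Subtype.ext
    refine prodext ?_ ?_
    · exact f.apply_symm_apply _
    · funext m; simp
  continuous_toFun := by
    apply Continuous.subtype_mk
    apply Continuous.prodMk
    · exact f.continuous.comp (continuous_fst.comp continuous_subtype_val)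
    · exact continuous_pi fun m =>
        (continuous_apply _).comp (continuous_snd.comp continuous_subtype_val)
  continuous_invFun := by
    apply Continuous.subtype_mk
    apply Continuous.prodMk
    · exact f.symm.continuous.comp (continuous_fst.comp continuous_subtype_val)
    · exact continuous_pi fun m =>
        (continuous_apply _).comp (continuous_snd.comp continuous_subtype_val)

lemma fwdH_apply (f : Q ≃ₜ Q) (σ : Equiv.Perm ℕ) (p : ↥XX) :
    ((fwdH f σ p : Q × Q)) = (f (p : Q × Q).1, fun m => (p : Q × Q).2 (σ.symm m)) := rfl

end Aux

/-- for sequences `A, B` of compact subsets of `Q`, there exist a homeomorphism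
`f : Q → Q` and a permutation `σ` of `ℕ` with `f(A_n) = B_{σ(n)}` for all `n` iff there is a
homeomorphism `g : 𝕏 → 𝕏` with `g(𝔸) = 𝔹` and `g(Q × {0⃗}) = Q × {0⃗}`. -/
theorem perm_homeomorph_iff_XX_homeomorph
    (A B : ℕ → Set Q) (hA : ∀ n, IsCompact (A n)) (hB : ∀ n, IsCompact (B n)) :
    (∃ f : Q ≃ₜ Q, ∃ σ : Equiv.Perm ℕ, ∀ n : ℕ, f '' A n = B (σ n)) ↔
    (∃ g : ↥XX ≃ₜ ↥XX, g '' AA A = AA B ∧ g '' QQ0 = QQ0) := by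
  constructor
  · rintro ⟨f, σ, hfσ⟩
    refine ⟨fwdH f σ, ?_, ?_⟩
    · apply image_eq_of_iff
      intro p
      constructor
      · intro hp m
        rw [fwdH_apply]
        rcases hp (σ.symm m) with h | h
        · exact Or.inl h
        · right
          have : f (p : Q × Q).1 ∈ f '' A (σ.symm m) := mem_image_of_mem f h
          rw [hfσ, Equiv.apply_symm_apply] at this
          exact this
      · intro hp k
        have := hp (σ k)
        rw [fwdH_apply] at this
        simp only [Equiv.symm_apply_apply] at this
        rcases this with h | h
        · exact Or.inl h
        · right
          rw [← hfσ k] at h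
          obtain ⟨a, ha, hfa⟩ := h
          rwa [← f.injective hfa]
    · apply image_eq_of_iff
      intro p
      constructor
      · intro hp
        show (fwdH f σ p : Q × Q).2 = 0
        rw [fwdH_apply]
        funext m
        exact congrFun hp (σ.symm m)
      · intro hp
        have hp' : (fun m => (p : Q × Q).2 (σ.symm m)) = 0 := hp
        funext m
        have := congrFun hp' (σ m)
        simpa using this
  · rintro ⟨g, hAB, hQ⟩
    have hQf : ∀ p ∈ QQ0, g p ∈ QQ0 := fun p hp => hQ ▸ mem_image_of_mem g hp
    have hQb : ∀ p ∈ QQ0, g.symm p ∈ QQ0 := by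
      intro p hp
      rw [← hQ] at hp
      obtain ⟨q, hq, hqp⟩ := hp
      rwa [← hqp, g.symm_apply_apply]
    have hABf : ∀ p ∈ AA A, g p ∈ AA B := fun p hp => hAB ▸ mem_image_of_mem g hp
    have hABb : ∀ p ∈ AA B, g.symm p ∈ AA A := by
      intro p hp
      rw [← hAB] at hp
      obtain ⟨q, hq, hqp⟩ := hp
      rwa [← hqp, g.symm_apply_apply]
    have hQf' : ∀ p : ↥XX, g p ∈ QQ0 → p ∈ QQ0 := by
      intro p hp
      have := hQb _ hp
      rwa [g.symm_apply_apply] at this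
    have hQb' : ∀ p : ↥XX, g.symm p ∈ QQ0 → p ∈ QQ0 := by
      intro p hp
      have := hQf _ hp
      rwa [g.apply_symm_apply] at this
    -- the permutation
    choose σ0 hσ0 using exists_V_image g hQf'
    choose τ0 hτ0 using exists_V_image g.symm hQb'
    have hτσ : ∀ n, τ0 (σ0 n) = n := by
      intro n
      have h1 : pt n 0 1 ∈ V n := pt_mem_V n 0 uI_one_ne_zero
      have h2 : g (pt n 0 1) ∈ V (σ0 n) := hσ0 n (mem_image_of_mem _ h1)
      have h3 : g.symm (g (pt n 0 1)) ∈ V (τ0 (σ0 n)) := hτ0 _ (mem_image_of_mem _ h2)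
      rw [g.symm_apply_apply] at h3
      exact V_disjoint h3 h1
    have hστ : ∀ m, σ0 (τ0 m) = m := by
      intro m
      have h1 : pt m 0 1 ∈ V m := pt_mem_V m 0 uI_one_ne_zero
      have h2 : g.symm (pt m 0 1) ∈ V (τ0 m) := hτ0 m (mem_image_of_mem _ h1)
      have h3 : g (g.symm (pt m 0 1)) ∈ V (σ0 (τ0 m)) := hσ0 _ (mem_image_of_mem _ h2)
      rw [g.apply_symm_apply] at h3
      exact V_disjoint h3 h1
    -- the homeomorphism of Q
    have hg0 : ∀ x : Q, g (q0 x) = q0 (((g (q0 x) : Q × Q)).1) := by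
      intro x
      have : g (q0 x) ∈ QQ0 := hQf (q0 x) rfl
      exact Subtype.ext (prodext rfl this)
    have hg1 : ∀ x : Q, g.symm (q0 x) = q0 (((g.symm (q0 x) : Q × Q)).1) := by
      intro x
      have : g.symm (q0 x) ∈ QQ0 := hQb (q0 x) rfl
      exact Subtype.ext (prodext rfl this)
    set f0 : Q → Q := fun x => ((g (q0 x) : Q × Q)).1 with hf0
    set f1 : Q → Q := fun x => ((g.symm (q0 x) : Q × Q)).1 with hf1
    have hleft : ∀ x, f1 (f0 x) = x := by
      intro x
      have h : g.symm (q0 (f0 x)) = q0 x := by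
        rw [hf0]; rw [← hg0 x, g.symm_apply_apply]
      show ((g.symm (q0 (f0 x)) : Q × Q)).1 = x
      rw [h]
      rfl
    have hright : ∀ x, f0 (f1 x) = x := by
      intro x
      have h : g (q0 (f1 x)) = q0 x := by
        rw [hf1]; rw [← hg1 x, g.apply_symm_apply]
      show ((g (q0 (f1 x)) : Q × Q)).1 = x
      rw [h]
      rfl
    refine ⟨⟨⟨f0, f1, hleft, hright⟩, ?_, ?_⟩, ⟨σ0, τ0, hτσ, hστ⟩, ?_⟩
    · exact (continuous_fst.comp continuous_subtype_val).comp (g.continuous.comp continuous_q0)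
    · exact (continuous_fst.comp continuous_subtype_val).comp (g.symm.continuous.comp continuous_q0)
    · intro n
      ext y
      constructor
      · rintro ⟨x, hx, rfl⟩
        exact half g A B hB hABf (hσ0 n) hx
      · intro hy
        have h1 : f1 y ∈ A n := by
          have := half g.symm B A hA hABb (hτ0 (σ0 n)) hy
          rwa [hτσ n] at this
        exact ⟨f1 y, h1, hright y⟩
end

section
/- Let g : 𝕏 → 𝕏 be a homeomorphism with g(Q × {0⃗}) = Q × {0⃗}. Then there exists a permutation σ of ℕ such that g(𝒳_n) = 𝒳_{σ(n)} for every n ∈ ℕ, where 𝒳_n = {(x,y) ∈ 𝕏 : y_n > 0}. -/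
open Set Topology

/-- `𝒳_n = {(x,y) ∈ 𝕏 : y_n > 0}`. -/
def XXn (n : ℕ) : Set ↥XX := {p | 0 < (p : Q × Q).2 n}

/-
The sets `𝒳_n` are pairwise disjoint, open, nonempty and connected (each is `Q × (0,1]` in
disguise), and they cover `𝕏 ∖ (Q × {0⃗})`. So they are exactly the connected components of
`𝕏 ∖ (Q × {0⃗})`, which `g` maps onto itself; a homeomorphism permutes connected components.
-/

open Function

theorem Pairwise.eq_of_subset_of_nonempty {ι X : Type*} {U : ι → Set X}
    (hdisj : Pairwise (Disjoint on U)) {i j : ι} (hne : (U i).Nonempty) (hij : U i ⊆ U j) :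
    i = j := by
  by_contra h
  exact hne.ne_empty ((hdisj h).eq_bot_of_le hij)

section PermutesPieces

variable {X ι : Type*} [TopologicalSpace X] {U : ι → Set X}

theorem IsPreconnected.exists_subset_of_subset_iUnion {S : Set X} (hS : IsPreconnected S)
    (hne : S.Nonempty) (hU : ∀ i, IsOpen (U i)) (hdisj : Pairwise (Disjoint on U))
    (hsub : S ⊆ ⋃ i, U i) : ∃ i, S ⊆ U i := by
  obtain ⟨p, hp⟩ := hne
  obtain ⟨i, hpi⟩ := mem_iUnion.mp (hsub hp)
  refine ⟨i, hS.subset_left_of_subset_union (hU i)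
    (isOpen_biUnion (s := {i}ᶜ) fun j _ => hU j) ?_ ?_ ⟨p, hp, hpi⟩⟩
  · exact disjoint_iUnion₂_right.mpr fun j hj => hdisj (Ne.symm hj)
  · intro q hq
    obtain ⟨j, hqj⟩ := mem_iUnion.mp (hsub hq)
    rcases eq_or_ne j i with rfl | hji
    · exact Or.inl hqj
    · exact Or.inr (mem_biUnion hji hqj)

theorem Continuous.exists_image_subset_of_isPreconnected {f : X → X} (hf : Continuous f)
    (hU : ∀ i, IsOpen (U i)) (hdisj : Pairwise (Disjoint on U)) (hne : ∀ i, (U i).Nonempty)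
    (hconn : ∀ i, IsPreconnected (U i)) (hfU : f '' ⋃ i, U i ⊆ ⋃ i, U i) (i : ι) :
    ∃ j, f '' U i ⊆ U j :=
  ((hconn i).image f hf.continuousOn).exists_subset_of_subset_iUnion ((hne i).image f) hU hdisj
    ((image_mono (subset_iUnion U i)).trans hfU)

theorem Homeomorph.exists_perm_image_eq (hU : ∀ i, IsOpen (U i))
    (hdisj : Pairwise (Disjoint on U)) (hne : ∀ i, (U i).Nonempty)
    (hconn : ∀ i, IsPreconnected (U i)) (h : X ≃ₜ X) (hh : h '' ⋃ i, U i = ⋃ i, U i) :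
    ∃ σ : Equiv.Perm ι, ∀ i, h '' U i = U (σ i) := by
  have hh' : h.symm '' ⋃ i, U i = ⋃ i, U i := by
    nth_rw 1 [← hh]
    exact h.symm_image_image _
  choose f hf using h.continuous.exists_image_subset_of_isPreconnected hU hdisj hne hconn hh.le
  choose f' hf' using
    h.symm.continuous.exists_image_subset_of_isPreconnected hU hdisj hne hconn hh'.le
  have hf'f : ∀ i, f' (f i) = i := fun i => Eq.symm <| hdisj.eq_of_subset_of_nonempty (hne i) <|
    calc U i = h.symm '' (h '' U i) := (h.symm_image_image _).symm
      _ ⊆ h.symm '' U (f i) := image_mono (hf i)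
      _ ⊆ U (f' (f i)) := hf' (f i)
  have hff' : ∀ j, f (f' j) = j := fun j => Eq.symm <| hdisj.eq_of_subset_of_nonempty (hne j) <|
    calc U j = h '' (h.symm '' U j) := (h.image_symm_image _).symm
      _ ⊆ h '' U (f' j) := image_mono (hf' j)
      _ ⊆ U (f (f' j)) := hf (f' j)
  refine ⟨⟨f, f', hf'f, hff'⟩, fun i => (hf i).antisymm ?_⟩
  calc U (f i) = h '' (h.symm '' U (f i)) := (h.image_symm_image _).symm
    _ ⊆ h '' U (f' (f i)) := image_mono (hf' (f i))
    _ = h '' U i := by rw [hf'f]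

end PermutesPieces

theorem isOpen_XXn (n : ℕ) : IsOpen (XXn n) :=
  isOpen_lt continuous_const
    ((continuous_apply n).comp (continuous_snd.comp continuous_subtype_val))

theorem pairwise_disjoint_XXn : Pairwise (Disjoint on XXn) := fun _ _ hnm =>
  disjoint_left.mpr fun p hn hm => hnm (p.2 hn.ne' hm.ne')

theorem iUnion_XXn : ⋃ n, XXn n = QQ0ᶜ := by
  ext p
  simp only [mem_iUnion, XXn, QQ0, mem_ofPred_eq, mem_compl_iff, funext_iff, not_forall,
    unitInterval.pos_iff_ne_zero]
  rfl

theorem single_mem_XX (x : Q) (n : ℕ) (t : unitInterval) : (x, Pi.single n t) ∈ XX := by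
  have hsupp : ∀ k, (Pi.single n t : Q) k ≠ 0 → k = n := fun k hk => by
    by_contra h
    exact hk (Pi.single_eq_of_ne h _)
  exact fun a ha b hb => (hsupp a ha).trans (hsupp b hb).symm

theorem XXn_nonempty (n : ℕ) : (XXn n).Nonempty :=
  ⟨⟨(0, Pi.single n 1), single_mem_XX 0 n 1⟩, by simp [XXn]⟩

theorem XXn_eq_image (n : ℕ) :
    Subtype.val '' XXn n =
      (fun z : Q × unitInterval => (z.1, Pi.single n z.2)) '' (univ ×ˢ Ioi 0) := by
  ext ⟨x, y⟩
  constructor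
  · rintro ⟨⟨_, hxy⟩, hp, rfl⟩
    refine ⟨(x, y n), ⟨mem_univ _, hp⟩, Prod.ext rfl (funext fun m => ?_)⟩
    rcases eq_or_ne m n with rfl | hmn
    · simp
    · change (Pi.single n (y n) : Q) m = y m
      rw [Pi.single_eq_of_ne hmn]
      by_contra hm
      exact hmn (hxy (Ne.symm hm) hp.ne')
  · rintro ⟨⟨x, t⟩, ⟨-, ht⟩, he⟩
    cases he
    exact ⟨⟨_, single_mem_XX x n t⟩, by simpa [XXn] using ht, rfl⟩

theorem isPreconnected_XXn (n : ℕ) : IsPreconnected (XXn n) := by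
  rw [← IsInducing.subtypeVal.isPreconnected_image, XXn_eq_image]
  exact (isPreconnected_univ.prod isPreconnected_Ioi).image _
    (continuous_fst.prodMk ((continuous_single (A := fun _ => unitInterval) n).comp
      continuous_snd)).continuousOn

/-- a homeomorphism of `𝕏` fixing `Q × {0⃗}` setwise permutes the sets `𝒳_n`. -/
theorem homeomorph_permutes_XXn
    (g : ↥XX ≃ₜ ↥XX) (hg : g '' QQ0 = QQ0) :
    ∃ σ : Equiv.Perm ℕ, ∀ n : ℕ, g '' XXn n = XXn (σ n) := by
  have hcompl : g '' ⋃ n, XXn n = ⋃ n, XXn n := by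
    rw [iUnion_XXn, image_compl_eq g.bijective, hg]
  exact g.exists_perm_image_eq isOpen_XXn pairwise_disjoint_XXn XXn_nonempty isPreconnected_XXn
    hcompl
end
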